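/- arXiv:1401.1089 — 7 statements merged into one kernel-verified Lean document; each statement's English description precedes it below -/
import Mathlib

section
/- For every nonnegative integer n, the number of derangements of an n-element set equals ∫_0^∞ (t-1)^n e^{-t} dt. -/
/-!
Expanding `(t - 1) ^ n` binomially and using `∫₀^∞ t ^ k e^{-t} dt = k!` turns the integral into
`∑ₖ (-1) ^ (n - k) n! / (n - k)!`, the inclusion–exclusion count of derangements; the latter is
checked against the recurrence `D (n + 1) = (n + 1) D n - (-1) ^ n`.
-/

open MeasureTheory Set Finset
open scoped Nat

theorem numDerangements_eq_sum_descFactorial (n : ℕ) :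
    (numDerangements n : ℤ) = ∑ k ∈ range (n + 1), (-1) ^ (n - k) * (n.descFactorial k : ℤ) := by
  induction n with
  | zero => rfl
  | succ n ih =>
    rw [numDerangements_succ, ih, sum_range_succ' _ (n + 1), mul_sum]
    simp only [Nat.succ_descFactorial_succ, Nat.add_sub_add_right, Nat.descFactorial_zero]
    push_cast
    rw [sum_congr rfl fun k _ => mul_left_comm _ _ _]
    ring

theorem integrableOn_pow_mul_exp_neg (k : ℕ) :
    IntegrableOn (fun t : ℝ => t ^ k * Real.exp (-t)) (Ioi 0) := by
  refine (Real.GammaIntegral_convergent (s := k + 1) (by positivity)).congr_fun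
    (fun t _ => ?_) measurableSet_Ioi
  simp [mul_comm]

theorem integral_pow_mul_exp_neg (k : ℕ) :
    ∫ t in Ioi (0 : ℝ), t ^ k * Real.exp (-t) = k ! := by
  rw [← Real.Gamma_nat_eq_factorial, Real.Gamma_eq_integral (by positivity)]
  refine setIntegral_congr_fun measurableSet_Ioi fun t _ => ?_
  simp [mul_comm]

theorem integral_sum_pow_mul_exp_neg (s : Finset ℕ) (c : ℕ → ℝ) :
    ∫ t in Ioi (0 : ℝ), (∑ k ∈ s, c k * t ^ k) * Real.exp (-t) = ∑ k ∈ s, c k * k ! := by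
  simp_rw [sum_mul, mul_assoc]
  rw [integral_finsetSum _ fun k _ => (integrableOn_pow_mul_exp_neg k).const_mul (c k)]
  simp_rw [integral_const_mul, integral_pow_mul_exp_neg]

theorem numDerangements_eq_integral (n : ℕ) :
    (numDerangements n : ℝ) = ∫ t in Set.Ioi (0 : ℝ), (t - 1) ^ n * Real.exp (-t) := by
  have binomial (t : ℝ) :
      (t - 1) ^ n = ∑ k ∈ range (n + 1), (-1) ^ (n - k) * (n.choose k : ℝ) * t ^ k := by
    rw [sub_eq_add_neg, add_pow]
    exact sum_congr rfl fun k _ => by ring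
  simp_rw [binomial, integral_sum_pow_mul_exp_neg]
  rw [← Int.cast_natCast, numDerangements_eq_sum_descFactorial]
  push_cast
  simp_rw [Nat.descFactorial_eq_factorial_mul_choose]
  push_cast
  exact sum_congr rfl fun k _ => by ring
end

section
/- Touchard's formula: the number of permutations π of Z/nZ with π(i) ≠ i and π(i) ≠ i+1 (indices mod n) equals Σ_{k=0}^{n} (-1)^k · (2n/(2n-k)) · (2n-k choose k) · (n-k)!, for n ≥ 2. -/
/-!
List the `2n` forbidden events around a cycle: position `2i` is `π i = i` and position `2i + 1`
is `π i = i + 1`, so that cyclically consecutive positions share either their argument or their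
value. A set `S` of events can hold simultaneously only if `S` contains no two cyclically
consecutive positions, and then the events form a partial bijection of size `|S|`, leaving
`(n - |S|)!` permutations. Inclusion–exclusion therefore gives `Σ_k (-1)^k c_k (n - k)!`, where `c_k` counts
the `k`-subsets of a `2n`-cycle without two neighbours. Splitting on whether `0 ∈ S` reduces
`c_k` to subsets of paths, of which there are `C(L + 1 - k, k)` on `L` vertices, and
`c_k = C(2n - k, k) + C(2n - k - 1, k - 1) = 2n / (2n - k) · C(2n - k, k)`.
-/

open Finset

theorem Finset.card_filter_powersetCard_succ_insert {α : Type*} [DecidableEq α] {s : Finset α}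
    {a : α} (ha : a ∉ s) (p : Finset α → Prop) [DecidablePred p] (k : ℕ) :
    #{S ∈ powersetCard (k + 1) (insert a s) | p S} =
      #{S ∈ powersetCard (k + 1) s | p S} + #{T ∈ powersetCard k s | p (insert a T)} := by
  have hinj : Set.InjOn (insert a) (powersetCard k s : Set (Finset α)) := fun T hT U hU h => by
    have hT : a ∉ T := fun h' => ha ((mem_powersetCard.1 hT).1 h')
    have hU : a ∉ U := fun h' => ha ((mem_powersetCard.1 hU).1 h')
    rw [← erase_insert hT, ← erase_insert hU, h]
  rw [powersetCard_succ_insert ha, filter_union, card_union_of_disjoint, filter_image,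
    card_image_of_injOn (hinj.mono (coe_subset.2 (filter_subset _ _)))]
  refine disjoint_left.2 fun S hS hS' => ?_
  obtain ⟨T, -, rfl⟩ := mem_image.1 (mem_filter.1 hS').1
  exact ha ((mem_powersetCard.1 (mem_filter.1 hS).1).1 (mem_insert_self a T))

theorem Finset.sum_filter_powerset_apply_card {α M : Type*} [AddCommMonoid M] (s : Finset α)
    (p : Finset α → Prop) [DecidablePred p] (g : ℕ → M) :
    ∑ S ∈ s.powerset with p S, g #S =
      ∑ k ∈ range (#s + 1), #{S ∈ powersetCard k s | p S} • g k := by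
  rw [← sum_fiberwise_of_maps_to' (g := card) (t := range (#s + 1)) fun S hS =>
    mem_range.2 (Nat.lt_succ_of_le (card_le_card (mem_powerset.1 (mem_filter.1 hS).1)))]
  refine sum_congr rfl fun k _ => ?_
  rw [sum_const]
  congr 2
  ext S
  simp only [mem_filter, mem_powerset, mem_powersetCard]
  tauto

theorem inclusion_exclusion_natCard_forall_not {β ι : Type*} [Fintype β] (T : Finset ι)
    (P : ι → β → Prop) :
    (Nat.card {x // ∀ t ∈ T, ¬ P t x} : ℤ) =
      ∑ S ∈ T.powerset, (-1) ^ #S * (Nat.card {x // ∀ t ∈ S, P t x} : ℤ) := by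
  classical
  have hinf : ∀ (S : Finset ι) (Q : ι → β → Prop) [∀ t, DecidablePred (Q t)],
      Nat.card {x // ∀ t ∈ S, Q t x} = #(S.inf fun t => ({x | Q t x} : Finset β)) :=
    fun S Q _ => by
      rw [Nat.card_eq_fintype_card, Fintype.card_subtype]
      congr 1
      ext x
      simp [mem_inf]
  simp only [hinf, ← compl_filter, inclusion_exclusion_card_inf_compl]

theorem Equiv.Perm.natCard_forall_apply_eq {α ι : Type*} [Finite α] {T : Finset ι}
    {a b : ι → α} (ha : Set.InjOn a T) (hb : Set.InjOn b T) :
    Nat.card {π : Perm α // ∀ t ∈ T, π (a t) = b t} = (Nat.card α - #T).factorial := by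
  classical
  let e : a '' T ≃ b '' T := (ha.bijOn_image.equiv a).symm.trans (hb.bijOn_image.equiv b)
  have he : ∀ t (ht : t ∈ T), (e ⟨a t, Set.mem_image_of_mem a ht⟩ : α) = b t := fun t ht => by
    have : (ha.bijOn_image.equiv a).symm ⟨a t, Set.mem_image_of_mem a ht⟩ = ⟨t, ht⟩ :=
      (Equiv.symm_apply_eq _).2 rfl
    simp only [e, Equiv.trans_apply, this]
    rfl
  have hcompl : ∀ {c : ι → α}, Set.InjOn c T → Nat.card ↥(c '' T)ᶜ = Nat.card α - #T :=
    fun hc => by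
      rw [Nat.card_coe_set_eq, Set.ncard_compl, hc.ncard_image, Set.ncard_coe_finset]
  obtain ⟨f⟩ := Finite.card_eq.1 ((hcompl ha).trans (hcompl hb).symm)
  calc Nat.card {π : Perm α // ∀ t ∈ T, π (a t) = b t}
      = Nat.card {π : Perm α // ∀ x : a '' T, π x = e x} := by
        refine Nat.card_congr <| Equiv.subtypeEquivRight fun π =>
          ⟨fun h x => ?_, fun h t ht => ?_⟩
        · obtain ⟨_, ⟨t, ht, rfl⟩⟩ := x
          rw [h t ht, he t ht]
        · rw [← he t ht, ← h]
    _ = Nat.card (((a '' T)ᶜ : Set α) ≃ ((b '' T)ᶜ : Set α)) :=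
        Nat.card_congr (Equiv.Set.compl e)
    _ = Nat.card (Perm ((a '' T)ᶜ : Set α)) :=
        Nat.card_congr (Equiv.equivCongr (Equiv.refl _) f.symm)
    _ = (Nat.card α - #T).factorial := by rw [Nat.card_perm, hcompl ha]

theorem ZMod.natCast_eq_natCast_of_le {n u v : ℕ} (hu : u ≤ n) (hv : v ≤ n)
    (h : (u : ZMod n) = v) : u = v ∨ u = 0 ∧ v = n ∨ u = n ∧ v = 0 := by
  rw [ZMod.natCast_eq_natCast_iff'] at h
  rcases hu.lt_or_eq with hu | rfl <;> rcases hv.lt_or_eq with hv | rfl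
  · rw [Nat.mod_eq_of_lt hu, Nat.mod_eq_of_lt hv] at h; omega
  · rw [Nat.mod_eq_of_lt hu, Nat.mod_self] at h; omega
  · rw [Nat.mod_eq_of_lt hv, Nat.mod_self] at h; omega
  · omega

def IsSeparated (S : Finset ℕ) : Prop := ∀ x ∈ S, x + 1 ∉ S

def IsCyclicallySeparated (m : ℕ) (S : Finset ℕ) : Prop := ∀ x ∈ S, (x + 1) % m ∉ S

instance : DecidablePred IsSeparated := fun S => inferInstanceAs (Decidable (∀ x ∈ S, _))

instance (m : ℕ) : DecidablePred (IsCyclicallySeparated m) := fun S =>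
  inferInstanceAs (Decidable (∀ x ∈ S, _))

theorem isSeparated_empty : IsSeparated ∅ := by simp [IsSeparated]

theorem isSeparated_insert {S : Finset ℕ} {y : ℕ} :
    IsSeparated (insert y S) ↔ IsSeparated S ∧ y + 1 ∉ S ∧ ∀ x ∈ S, x + 1 ≠ y := by
  simp only [IsSeparated, mem_insert]
  grind

theorem isCyclicallySeparated_iff {m : ℕ} {S : Finset ℕ} (hS : ∀ x ∈ S, x < m) :
    IsCyclicallySeparated m S ↔ IsSeparated S ∧ (m - 1 ∈ S → 0 ∉ S) := by
  have hsucc : ∀ x ∈ S, (x + 1) % m = if x + 1 = m then 0 else x + 1 := fun x hx => by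
    split_ifs with h
    · simp [h]
    · exact Nat.mod_eq_of_lt (by have := hS x hx; omega)
  constructor
  · intro h
    refine ⟨fun x hx hx1 => ?_, fun hm h0 => ?_⟩
    · have := hS _ hx1
      exact h x hx (by rwa [hsucc x hx, if_neg (by omega)])
    · have := hS _ hm
      exact h _ hm (by rwa [hsucc _ hm, if_pos (by omega)])
  · rintro ⟨hsep, hwrap⟩ x hx
    rw [hsucc x hx]
    split_ifs with h
    · exact hwrap (by rwa [show m - 1 = x by omega])
    · exact hsep x hx

theorem card_isSeparated_Ico (a b k : ℕ) :
    #{S ∈ powersetCard k (Ico a b) | IsSeparated S} = (b - a + 1 - k).choose k := by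
  induction b using Nat.strong_induction_on generalizing k with
  | _ b ih =>
  rcases k with _ | k
  · rw [powersetCard_zero, filter_singleton, if_pos isSeparated_empty]
    simp
  rcases Nat.lt_or_ge a b with hab | hab
  swap
  · rw [Ico_eq_empty (by omega), powersetCard_eq_empty.2 (by simp)]
    simp [show b - a + 1 - (k + 1) = 0 by omega]
  obtain ⟨c, rfl⟩ : ∃ c, b = c + 1 := ⟨b - 1, by omega⟩
  have htop : {T ∈ powersetCard k (Ico a c) | IsSeparated (insert c T)} =
      {T ∈ powersetCard k (Ico a (c - 1)) | IsSeparated T} := by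
    ext T
    simp only [mem_filter, mem_powersetCard, isSeparated_insert, subset_iff, mem_Ico]
    constructor
    · rintro ⟨⟨hT, rfl⟩, hsep, -, hc⟩
      exact ⟨⟨fun x hx => by have := hT hx; have := hc x hx; omega, rfl⟩, hsep⟩
    · rintro ⟨⟨hT, rfl⟩, hsep⟩
      exact ⟨⟨fun x hx => by have := hT hx; omega, rfl⟩, hsep,
        fun h => by have := hT h; omega, fun x hx => by have := hT hx; omega⟩
  rw [Nat.Ico_succ_right_eq_insert_Ico (by omega), card_filter_powersetCard_succ_insert (by simp),
    htop, ih _ (by omega), ih _ (by omega)]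
  rcases k with _ | k
  · simp only [zero_add, add_tsub_cancel_right, Nat.choose_one_right, tsub_zero,
      Nat.choose_zero_right]
    omega
  rcases Nat.lt_or_ge (c - a) (k + 1) with h | h
  · simp [Nat.choose_eq_zero_of_lt, show c + 1 - a + 1 - (k + 1 + 1) = 0 by omega,
      show c - a + 1 - (k + 1 + 1) = 0 by omega, show c - 1 - a + 1 - (k + 1) = 0 by omega]
  · rw [show c + 1 - a + 1 - (k + 1 + 1) = (c - a - (k + 1)) + 1 by omega,
      show c - a + 1 - (k + 1 + 1) = c - a - (k + 1) by omega,
      show c - 1 - a + 1 - (k + 1) = c - a - (k + 1) by omega, Nat.choose_succ_succ', add_comm]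

theorem card_isCyclicallySeparated {m : ℕ} (hm : 3 ≤ m) (k : ℕ) :
    #{S ∈ powersetCard (k + 1) (range m) | IsCyclicallySeparated m S} =
      (m - k - 1).choose (k + 1) + (m - k - 2).choose k := by
  have hzero : {S ∈ powersetCard (k + 1) (Ico 1 m) | IsCyclicallySeparated m S} =
      {S ∈ powersetCard (k + 1) (Ico 1 m) | IsSeparated S} := by
    refine filter_congr fun S hS => ?_
    have hS := (mem_powersetCard.1 hS).1
    rw [isCyclicallySeparated_iff fun x hx => (mem_Ico.1 (hS hx)).2]
    have : 0 ∉ S := fun h => by simpa using hS h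
    tauto
  have hins : {T ∈ powersetCard k (Ico 1 m) | IsCyclicallySeparated m (insert 0 T)} =
      {T ∈ powersetCard k (Ico 2 (m - 1)) | IsSeparated T} := by
    ext T
    simp only [mem_filter, mem_powersetCard, subset_iff, mem_Ico]
    constructor
    · rintro ⟨⟨hT, rfl⟩, h⟩
      rw [isCyclicallySeparated_iff (by grind), isSeparated_insert] at h
      obtain ⟨⟨hsep, h1, -⟩, hwrap⟩ := h
      have hm1 : m - 1 ∉ T := fun h' => hwrap (mem_insert_of_mem h') (mem_insert_self 0 T)
      exact ⟨⟨fun x hx => by grind, rfl⟩, hsep⟩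
    · rintro ⟨⟨hT, rfl⟩, hsep⟩
      refine ⟨⟨fun x hx => by grind, rfl⟩, ?_⟩
      rw [isCyclicallySeparated_iff (by grind), isSeparated_insert]
      grind
  rw [range_eq_Ico, ← insert_Ico_add_one_left_eq_Ico (by omega),
    card_filter_powersetCard_succ_insert (by simp), zero_add, hzero, hins,
    card_isSeparated_Ico, card_isSeparated_Ico]
  congr 2 <;> omega

theorem card_isCyclicallySeparated_eq_div {m k : ℕ} (hm : 3 ≤ m) (hk : k < m) :
    (#{S ∈ powersetCard k (range m) | IsCyclicallySeparated m S} : ℚ) =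
      m / (m - k) * (m - k).choose k := by
  rcases k with _ | j
  · rw [powersetCard_zero, filter_singleton, if_pos (by simp [IsCyclicallySeparated])]
    have : (m : ℚ) ≠ 0 := by positivity
    simp [this]
  obtain ⟨N, rfl⟩ : ∃ N, m = N + 1 + (j + 1) := ⟨m - (j + 1) - 1, by omega⟩
  have key : ((N : ℚ) + 1) * N.choose j = (N + 1).choose (j + 1) * (j + 1) := by
    exact_mod_cast Nat.add_one_mul_choose_eq N j
  rw [card_isCyclicallySeparated hm, show N + 1 + (j + 1) - j - 1 = N + 1 by omega,
    show N + 1 + (j + 1) - j - 2 = N by omega, show N + 1 + (j + 1) - (j + 1) = N + 1 by omega]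
  have hN : (N : ℚ) + 1 ≠ 0 := by positivity
  push_cast
  field_simp
  linear_combination key

theorem card_isCyclicallySeparated_eq_zero {m k : ℕ} (hm : 3 ≤ m) (hk : m < 2 * k) :
    #{S ∈ powersetCard k (range m) | IsCyclicallySeparated m S} = 0 := by
  obtain ⟨j, rfl⟩ : ∃ j, k = j + 1 := ⟨k - 1, by omega⟩
  rw [card_isCyclicallySeparated hm, Nat.choose_eq_zero_of_lt (by omega),
    Nat.choose_eq_zero_of_lt (by omega)]

def menageArg (n t : ℕ) : ZMod n := (t / 2 : ℕ)

def menageVal (n t : ℕ) : ZMod n := ((t + 1) / 2 : ℕ)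

theorem forall_ne_and_ne_add_one_iff {n : ℕ} [NeZero n] (π : Equiv.Perm (ZMod n)) :
    (∀ i, π i ≠ i ∧ π i ≠ i + 1) ↔ ∀ t ∈ range (2 * n), π (menageArg n t) ≠ menageVal n t := by
  constructor
  · intro h t ht
    rcases Nat.even_or_odd' t with ⟨i, rfl | rfl⟩
    · simpa [menageArg, menageVal, show (2 * i + 1) / 2 = i by omega] using (h i).1
    · simpa [menageArg, menageVal, show (2 * i + 1) / 2 = i by omega,
        show (2 * i + 1 + 1) / 2 = i + 1 by omega] using (h i).2
  · intro h i
    have hi := ZMod.val_lt i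
    constructor
    · simpa [menageArg, menageVal, show (2 * i.val + 1) / 2 = i.val by omega] using
        h (2 * i.val) (mem_range.2 (by omega))
    · simpa [menageArg, menageVal, show (2 * i.val + 1) / 2 = i.val by omega,
        show (2 * i.val + 1 + 1) / 2 = i.val + 1 by omega] using
        h (2 * i.val + 1) (mem_range.2 (by omega))

theorem eq_or_adjacent_of_menageArg_eq_or_menageVal_eq {n x y : ℕ} (hx : x < 2 * n)
    (hy : y < 2 * n) (h : menageArg n x = menageArg n y ∨ menageVal n x = menageVal n y) :
    x = y ∨ y = x + 1 ∨ x = y + 1 ∨ x = 0 ∧ y = 2 * n - 1 ∨ y = 0 ∧ x = 2 * n - 1 := by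
  rcases h with h | h
  · have := ZMod.natCast_eq_natCast_of_le (by omega) (by omega) h
    omega
  · have := ZMod.natCast_eq_natCast_of_le (by omega) (by omega) h
    omega

theorem injOn_menageArg_and_menageVal {n : ℕ} {S : Finset ℕ} (hS : S ⊆ range (2 * n))
    (hsep : IsCyclicallySeparated (2 * n) S) :
    Set.InjOn (menageArg n) S ∧ Set.InjOn (menageVal n) S := by
  obtain ⟨hsep, hwrap⟩ := (isCyclicallySeparated_iff fun x hx => mem_range.1 (hS hx)).1 hsep
  have key : ∀ x ∈ S, ∀ y ∈ S,
      menageArg n x = menageArg n y ∨ menageVal n x = menageVal n y → x = y := by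
    intro x hx y hy h
    rcases eq_or_adjacent_of_menageArg_eq_or_menageVal_eq (mem_range.1 (hS hx))
      (mem_range.1 (hS hy)) h with h | rfl | rfl | ⟨rfl, rfl⟩ | ⟨rfl, rfl⟩
    · exact h
    · exact absurd hy (hsep x hx)
    · exact absurd hx (hsep y hy)
    · exact absurd hx (hwrap hy)
    · exact absurd hy (hwrap hx)
  exact ⟨fun x hx y hy h => key x hx y hy (.inl h), fun x hx y hy h => key x hx y hy (.inr h)⟩

theorem menageArg_eq_iff_menageVal_ne {n x : ℕ} (hn : 2 ≤ n) (hx : x < 2 * n) :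
    menageArg n x = menageArg n ((x + 1) % (2 * n)) ↔
      menageVal n x ≠ menageVal n ((x + 1) % (2 * n)) := by
  have : Fact (1 < n) := ⟨hn⟩
  rcases Nat.lt_or_ge (x + 1) (2 * n) with hx' | hx'
  · rw [Nat.mod_eq_of_lt hx']
    rcases Nat.even_or_odd' x with ⟨i, rfl | rfl⟩
    · simp [menageArg, menageVal, show (2 * i + 1) / 2 = i by omega,
        show (2 * i + 1 + 1) / 2 = i + 1 by omega]
    · simp [menageArg, menageVal, show (2 * i + 1) / 2 = i by omega,
        show (2 * i + 1 + 1) / 2 = i + 1 by omega,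
        show (2 * i + 1 + 1 + 1) / 2 = i + 1 by omega]
  · obtain rfl : x = 2 * n - 1 := by omega
    have : ((n - 1 : ℕ) : ZMod n) ≠ 0 := by
      rw [Ne, ZMod.natCast_eq_zero_iff]
      exact Nat.not_dvd_of_pos_of_lt (by omega) (by omega)
    simp [menageArg, menageVal, show (2 * n - 1) / 2 = n - 1 by omega,
      show 2 * n - 1 + 1 = 2 * n by omega, this]

theorem natCard_perm_menageArg_eq_menageVal {n : ℕ} (hn : 2 ≤ n) {S : Finset ℕ}
    (hS : S ⊆ range (2 * n)) :
    Nat.card {π : Equiv.Perm (ZMod n) // ∀ t ∈ S, π (menageArg n t) = menageVal n t} =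
      if IsCyclicallySeparated (2 * n) S then (n - #S).factorial else 0 := by
  have : NeZero n := ⟨by omega⟩
  split_ifs with hsep
  · obtain ⟨harg, hval⟩ := injOn_menageArg_and_menageVal hS hsep
    rw [Equiv.Perm.natCard_forall_apply_eq harg hval, Nat.card_zmod]
  · simp only [IsCyclicallySeparated, not_forall, not_not] at hsep
    obtain ⟨x, hx, hy⟩ := hsep
    rw [Nat.card_eq_zero]
    refine .inl ⟨fun ⟨π, hπ⟩ => ?_⟩
    have hxy := menageArg_eq_iff_menageVal_ne hn (mem_range.1 (hS hx))
    by_cases harg : menageArg n x = menageArg n ((x + 1) % (2 * n))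
    · exact hxy.1 harg (by rw [← hπ x hx, ← hπ _ hy, harg])
    · exact harg (π.injective (by rw [hπ x hx, hπ _ hy]; exact not_not.1 (mt hxy.2 harg)))

theorem touchard_menage (n : ℕ) (hn : 2 ≤ n) :
    (Nat.card {π : Equiv.Perm (ZMod n) // ∀ i, π i ≠ i ∧ π i ≠ i + 1} : ℚ) =
      ∑ k ∈ Finset.range (n + 1),
        (-1 : ℚ) ^ k * ((2 * n : ℚ) / (2 * n - k)) * ((2 * n - k).choose k) *
          (n - k).factorial := by
  have : NeZero n := ⟨by omega⟩
  calc (Nat.card {π : Equiv.Perm (ZMod n) // ∀ i, π i ≠ i ∧ π i ≠ i + 1} : ℚ)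
      = ∑ S ∈ (range (2 * n)).powerset, (-1) ^ #S * (Nat.card {π : Equiv.Perm (ZMod n) //
          ∀ t ∈ S, π (menageArg n t) = menageVal n t} : ℚ) := by
        rw [Nat.card_congr (Equiv.subtypeEquivRight forall_ne_and_ne_add_one_iff)]
        exact_mod_cast inclusion_exclusion_natCard_forall_not (range (2 * n))
          fun t (π : Equiv.Perm (ZMod n)) => π (menageArg n t) = menageVal n t
    _ = ∑ S ∈ (range (2 * n)).powerset with IsCyclicallySeparated (2 * n) S,
          (-1 : ℚ) ^ #S * (n - #S).factorial := by
        rw [sum_filter]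
        refine sum_congr rfl fun S hS => ?_
        rw [natCard_perm_menageArg_eq_menageVal hn (mem_powerset.1 hS)]
        split_ifs <;> simp
    _ = ∑ k ∈ range (2 * n + 1), (#{S ∈ powersetCard k (range (2 * n)) |
          IsCyclicallySeparated (2 * n) S} : ℚ) * ((-1) ^ k * (n - k).factorial) := by
        simp only [sum_filter_powerset_apply_card _ _ fun k => (-1 : ℚ) ^ k * (n - k).factorial,
          card_range, nsmul_eq_mul]
    _ = ∑ k ∈ range (n + 1), (#{S ∈ powersetCard k (range (2 * n)) |
          IsCyclicallySeparated (2 * n) S} : ℚ) * ((-1) ^ k * (n - k).factorial) := by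
        refine (sum_subset (range_subset_range.2 (by omega)) fun k hk hk' => ?_).symm
        simp only [mem_range] at hk hk'
        rw [card_isCyclicallySeparated_eq_zero (by omega) (by omega), Nat.cast_zero, zero_mul]
    _ = _ := by
        refine sum_congr rfl fun k hk => ?_
        rw [card_isCyclicallySeparated_eq_div (by omega) (by have := mem_range.1 hk; omega)]
        push_cast
        ring
end

section
/- The ménage numbers satisfy the recurrence A(n) = n·A(n-1) + 2·A(n-2) - (n-4)·A(n-3) - A(n-4) for all n ≥ 6. -/
/-- The round-table ménage numbers: permutations `π` of `ℤ/nℤ` with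
`π i ≠ i` and `π i ≠ i + 1` for all `i`. -/
noncomputable def menage (n : ℕ) : ℕ :=
  Nat.card {π : Equiv.Perm (ZMod n) // ∀ i, π i ≠ i ∧ π i ≠ i + 1}

/-!
Inclusion–exclusion over the `2n` forbidden cells `(i, i)` and `(i, i + 1)` writes `A(n)` as
`∑ₖ (-1)ᵏ rₖ (n - k)!`, where `rₖ` counts `k` forbidden cells no two in a common row or column.
Listed in the order `(0,0), (0,1), (1,1), (1,2), …`, the cells form a cycle of length `2n` in
which exactly the neighbours share a row or a column, so `rₖ` counts the `k`-subsets of a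
`2n`-cycle without two neighbours, `C(2n-k, k) + C(2n-k-1, k-1)`. This splits `A(n)` as
`U(n) - U(n-1)` with `U(n) = ∑ⱼ (-1)^(n+j) C(n+j, 2j) j!` the straight-table ménage numbers.
A telescoping certificate gives `U(n+3) = (n+2) (U(n+2) + U(n+1)) + U(n)`, and the recurrence
for `A` is the combination of three instances of it.
-/

open Finset Nat

namespace Equiv.Perm

variable {α ι : Type*}

theorem injOn_of_agreeing {t : Finset ι} {r s : ι → α} (ht : Set.InjOn (fun c ↦ (r c, s c)) t)
    {π : Perm α} (hπ : ∀ c ∈ t, π (r c) = s c) : Set.InjOn r t ∧ Set.InjOn s t := by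
  constructor <;> intro c hc c' hc' h <;> refine ht hc hc' (Prod.ext ?_ ?_)
  · exact h
  · exact (hπ c hc).symm.trans (h ▸ hπ c' hc')
  · exact π.injective ((hπ c hc).trans (h.trans (hπ c' hc').symm))
  · exact h

variable [Fintype α] [DecidableEq α]

theorem card_fixing (A : Finset α) :
    #{σ : Perm α | ∀ a ∈ A, σ a = a} = (Fintype.card α - #A)! := by
  have e := Perm.subtypeEquivSubtypePerm (· ∉ A)
  simp only [not_not] at e
  rw [← Fintype.card_subtype, ← Fintype.card_congr e, Fintype.card_perm,
    Fintype.card_subtype_compl, Fintype.card_coe]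

theorem card_agreeing (t : Finset ι) (r s : ι → α) (hr : Set.InjOn r t) (hs : Set.InjOn s t) :
    #{π : Perm α | ∀ c ∈ t, π (r c) = s c} = (Fintype.card α - #t)! := by
  obtain ⟨π₀, hπ₀⟩ := exists_extending_pair (fun c : t ↦ r c) (fun c : t ↦ s c)
    (hr.injective) (hs.injective)
  rw [← Finset.card_image_of_injOn hr, ← card_fixing, ← Fintype.card_subtype,
    ← Fintype.card_subtype]
  refine Fintype.card_congr ((Equiv.mulLeft π₀).subtypeEquiv fun σ ↦ ?_).symm
  simp only [forall_mem_image, coe_mulLeft, Perm.mul_apply]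
  exact forall₂_congr fun c hc ↦ by rw [← hπ₀ ⟨c, hc⟩, π₀.injective.eq_iff]

open scoped Classical in
theorem card_avoiding_eq_sum (u : Finset ι) (r s : ι → α) (hu : Set.InjOn (fun c ↦ (r c, s c)) u) :
    (#{π : Perm α | ∀ c ∈ u, π (r c) ≠ s c} : ℤ) = ∑ k ∈ range (#u + 1),
      (-1) ^ k * #((u.powersetCard k).filter fun t : Finset ι ↦ Set.InjOn r t ∧ Set.InjOn s t) *
        ((Fintype.card α - k)! : ℤ) := by
  let S c : Finset (Perm α) := {π | π (r c) = s c}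
  have hS (t : Finset ι) : t.inf S = ({π | ∀ c ∈ t, π (r c) = s c} : Finset (Perm α)) := by
    ext; simp [S, mem_inf]
  have hcompl : ({π | ∀ c ∈ u, π (r c) ≠ s c} : Finset (Perm α)) = u.inf fun c ↦ (S c)ᶜ := by
    ext; simp [S, mem_inf]
  rw [hcompl, inclusion_exclusion_card_inf_compl, powerset_card_disjiUnion]
  refine (sum_disjiUnion (M := ℤ) _ _ _).trans ?_
  refine sum_congr rfl fun k _ ↦ ?_
  rw [card_filter, Nat.cast_sum, mul_sum, sum_mul]
  refine sum_congr rfl fun t ht ↦ ?_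
  obtain ⟨htu, rfl⟩ := mem_powersetCard.1 ht
  rw [hS]
  split_ifs with hinj
  · rw [card_agreeing t r s hinj.1 hinj.2]; simp
  · rw [filter_false_of_mem fun π _ hπ ↦ hinj (injOn_of_agreeing (hu.mono htu) hπ)]; simp

end Equiv.Perm

theorem card_eq_card_add_card_of_insert {α : Type*} [DecidableEq α] {F G H : Finset (Finset α)}
    (e : α) (hG : ∀ s, s ∈ G ↔ s ∈ F ∧ e ∉ s) (hH : ∀ u, u ∈ H ↔ e ∉ u ∧ insert e u ∈ F) :
    #F = #G + #H := by
  rw [← card_filter_add_card_filter_not (p := (e ∉ ·)) (s := F)]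
  congr 1
  · congr 1; ext s; simp [hG]
  · refine card_nbij' (erase · e) (insert e) (fun s hs ↦ ?_) (fun u hu ↦ ?_) (fun s hs ↦ ?_)
      (fun u hu ↦ ?_)
    · simp only [mem_coe, mem_filter, not_not] at hs
      simp [hH, insert_erase hs.2, hs.1]
    · rw [mem_coe, hH] at hu
      simpa using hu.2
    · simp only [mem_coe, mem_filter, not_not] at hs
      exact insert_erase hs.2
    · rw [mem_coe, hH] at hu
      exact erase_insert hu.1

def sparseSets (S : Finset ℕ) (k : ℕ) : Finset (Finset ℕ) :=
  (S.powersetCard k).filter fun s ↦ ∀ x ∈ s, x + 1 ∉ s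

theorem mem_sparseSets {S s : Finset ℕ} {k : ℕ} :
    s ∈ sparseSets S k ↔ s ⊆ S ∧ #s = k ∧ ∀ x ∈ s, x + 1 ∉ s := by
  simp [sparseSets, and_assoc]

@[simp] theorem sparseSets_zero (S : Finset ℕ) : sparseSets S 0 = {∅} := by
  simp [sparseSets, filter_singleton]

theorem card_sparseSets_Ico_add_two (a b k : ℕ) (hab : a ≤ b + 1) :
    #(sparseSets (Ico a (b + 2)) (k + 1)) =
      #(sparseSets (Ico a (b + 1)) (k + 1)) + #(sparseSets (Ico a b) k) := by
  refine card_eq_card_add_card_of_insert (b + 1) (fun s ↦ ?_) (fun u ↦ ?_)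
  · simp only [mem_sparseSets, subset_iff, mem_Ico]
    grind
  · simp only [mem_sparseSets, subset_iff, mem_Ico]
    constructor
    · rintro ⟨hS, rfl, hsp⟩
      have hb : b + 1 ∉ u := fun h ↦ by have := hS h; omega
      refine ⟨hb, ?_, card_insert_of_notMem hb, ?_⟩ <;> grind
    · rintro ⟨hb, hS, hk, hsp⟩
      rw [card_insert_of_notMem hb] at hk
      refine ⟨fun x hx ↦ ?_, by omega,
        fun x hx h ↦ hsp x (mem_insert_of_mem hx) (mem_insert_of_mem h)⟩
      have : x ≠ b + 1 := by rintro rfl; exact hb hx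
      have : x ≠ b := fun hxb ↦ hsp x (mem_insert_of_mem hx) (hxb ▸ mem_insert_self _ u)
      have := hS (mem_insert_of_mem hx)
      omega

theorem card_sparseSets_Ico (a t k : ℕ) :
    #(sparseSets (Ico a (a + t)) k) = (t + 1 - k).choose k := by
  induction t using Nat.strong_induction_on generalizing k with
  | _ t ih =>
  rcases k with _ | k
  · simp
  match t with
  | 0 => simp [sparseSets]
  | 1 =>
    rcases k with _ | k
    · simp [sparseSets, powersetCard_one, filter_singleton]
    · simp [sparseSets]
  | t + 2 =>
    rw [← add_assoc, card_sparseSets_Ico_add_two _ _ _ (by omega), add_assoc,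
      ih (t + 1) (by omega), ih t (by omega)]
    rcases le_or_gt k (t + 1) with hk | hk
    · rw [show t + 2 + 1 - (k + 1) = t + 1 - k + 1 by omega, choose_succ_succ',
        show t + 1 + 1 - (k + 1) = t + 1 - k by omega, add_comm]
    · simp [show t + 1 - k = 0 by omega, show t + 2 + 1 - (k + 1) = 0 by omega,
        choose_eq_zero_of_lt hk.pos]

def cyclicSparseSets (M k : ℕ) : Finset (Finset ℕ) :=
  (sparseSets (range M) k).filter fun s ↦ 0 ∈ s → M - 1 ∉ s

theorem mem_cyclicSparseSets {M k : ℕ} {s : Finset ℕ} :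
    s ∈ cyclicSparseSets M k ↔
      s ⊆ range M ∧ #s = k ∧ (∀ x ∈ s, x + 1 ∉ s) ∧ (0 ∈ s → M - 1 ∉ s) := by
  simp [cyclicSparseSets, mem_sparseSets, and_assoc]

theorem card_cyclicSparseSets_succ (M k : ℕ) (hM : 3 ≤ M) :
    #(cyclicSparseSets M (k + 1)) = (M - (k + 1)).choose (k + 1) + (M - 2 - k).choose k := by
  rw [card_eq_card_add_card_of_insert 0 (G := sparseSets (Ico 1 (1 + (M - 1))) (k + 1))
    (H := sparseSets (Ico 2 (2 + (M - 3))) k) (fun s ↦ ?_) (fun u ↦ ?_),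
    card_sparseSets_Ico, card_sparseSets_Ico, show M - 1 + 1 - (k + 1) = M - (k + 1) by omega,
    show M - 3 + 1 - k = M - 2 - k by omega]
  · simp only [mem_sparseSets, mem_cyclicSparseSets, subset_iff, mem_Ico, mem_range]
    grind
  · simp only [mem_sparseSets, mem_cyclicSparseSets, subset_iff, mem_Ico, mem_range]
    constructor
    · rintro ⟨hS, rfl, hsp⟩
      have h0 : 0 ∉ u := fun h ↦ by have := hS h; omega
      refine ⟨h0, ?_, card_insert_of_notMem h0, ?_, ?_⟩ <;> grind
    · rintro ⟨h0, hS, hk, hsp, hwrap⟩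
      rw [card_insert_of_notMem h0] at hk
      refine ⟨fun x hx ↦ ?_, by omega,
        fun x hx h ↦ hsp x (mem_insert_of_mem hx) (mem_insert_of_mem h)⟩
      have : x ≠ 0 := by rintro rfl; exact h0 hx
      have : x ≠ 1 := by rintro rfl; exact hsp 0 (mem_insert_self 0 u) (mem_insert_of_mem hx)
      have : x ≠ M - 1 := by rintro rfl; exact hwrap (mem_insert_self 0 u) (mem_insert_of_mem hx)
      have := hS (mem_insert_of_mem hx)
      omega

def straightMenageTerm (n j : ℕ) : ℤ := (-1) ^ (n + j) * (n + j).choose (2 * j) * j !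

/-- Reindexed by `k = n - j` (`sum_alternating_choose_eq_straightMenage`), this is the rook
expansion `∑ₖ (-1)ᵏ C(2n-k, k) (n-k)!` for the `2n - 1` forbidden cells of a straight table. -/
def straightMenage (n : ℕ) : ℤ := ∑ j ∈ range (n + 1), straightMenageTerm n j

theorem straightMenageTerm_eq_zero {n j : ℕ} (h : n < j) : straightMenageTerm n j = 0 := by
  simp [straightMenageTerm, choose_eq_zero_of_lt (show n + j < 2 * j by omega)]

theorem straightMenage_eq_sum {n N : ℕ} (h : n < N) :
    straightMenage n = ∑ j ∈ range N, straightMenageTerm n j :=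
  sum_subset (range_subset_range.2 h) fun j _ hj ↦
    straightMenageTerm_eq_zero (by simpa using hj)

def straightMenageCert (n j : ℕ) : ℤ := (-1) ^ (n + j) * j ! *
  ((n + j).choose (2 * j) - (n + j + 1).choose (2 * j) - (n + j + 2).choose (2 * j) +
    (n + j + 3).choose (2 * j))

theorem straightMenageTerm_recurrence (n j : ℕ) :
    straightMenageTerm (n + 3) j - (n + 2) * straightMenageTerm (n + 2) j -
        (n + 2) * straightMenageTerm (n + 1) j - straightMenageTerm n j =
      straightMenageCert n (j + 1) - straightMenageCert n j := by
  have p₁ : (n + j + 2).choose (2 * j + 1) = (n + j + 1).choose (2 * j) +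
      (n + j + 1).choose (2 * j + 1) := choose_succ_succ _ _
  have p₂ : (n + j + 2).choose (2 * j + 2) = (n + j + 1).choose (2 * j + 1) +
      (n + j + 1).choose (2 * j + 2) := choose_succ_succ _ _
  have p₃ : (n + j + 3).choose (2 * j + 1) = (n + j + 2).choose (2 * j) +
      (n + j + 2).choose (2 * j + 1) := choose_succ_succ _ _
  have p₄ : (n + j + 4).choose (2 * j + 2) = (n + j + 3).choose (2 * j + 1) +
      (n + j + 3).choose (2 * j + 2) := choose_succ_succ _ _
  have a₁ : (n + j + 2) * (n + j + 1).choose (2 * j) =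
      (n + j + 2).choose (2 * j + 1) * (2 * j + 1) := add_one_mul_choose_eq _ _
  have a₂ : (n + j + 3) * (n + j + 2).choose (2 * j) =
      (n + j + 3).choose (2 * j + 1) * (2 * j + 1) := add_one_mul_choose_eq _ _
  zify at p₁ p₂ p₃ p₄ a₁ a₂
  simp only [straightMenageTerm, straightMenageCert, factorial_succ,
    show n + 3 + j = n + j + 3 by omega, show n + 2 + j = n + j + 2 by omega,
    show n + 1 + j = n + j + 1 by omega, show n + (j + 1) = n + j + 1 by omega,
    show n + j + 1 + 1 = n + j + 2 by omega, show n + j + 1 + 2 = n + j + 3 by omega,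
    show n + j + 1 + 3 = n + j + 4 by omega, show 2 * (j + 1) = 2 * j + 2 by omega]
  push_cast
  set c : ℤ := (-1) ^ (n + j) * (j ! : ℤ)
  linear_combination c * a₁ - c * a₂ + (j + 1) * c * p₁ - (j + 1) * c * p₂ - j * c * p₃ +
    (j + 1) * c * p₄

theorem straightMenage_recurrence (n : ℕ) :
    straightMenage (n + 3) = (n + 2) * (straightMenage (n + 2) + straightMenage (n + 1)) +
      straightMenage n := by
  have htel := sum_range_sub (straightMenageCert n) (n + 4)
  simp only [← straightMenageTerm_recurrence, sum_sub_distrib, ← mul_sum] at htel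
  have hlast : straightMenageCert n (n + 4) = 0 := by
    simp [straightMenageCert, choose_eq_zero_of_lt (show n + (n + 4) + 3 < 2 * (n + 4) by omega),
      choose_eq_zero_of_lt (show n + (n + 4) + 2 < 2 * (n + 4) by omega),
      choose_eq_zero_of_lt (show n + (n + 4) + 1 < 2 * (n + 4) by omega),
      choose_eq_zero_of_lt (show n + (n + 4) < 2 * (n + 4) by omega)]
  have hfirst : straightMenageCert n 0 = 0 := by simp [straightMenageCert]
  rw [hlast, hfirst, ← straightMenage_eq_sum (by omega), ← straightMenage_eq_sum (by omega),
    ← straightMenage_eq_sum (by omega), ← straightMenage_eq_sum (by omega)] at htel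
  linear_combination htel

theorem sum_alternating_choose_eq_straightMenage {n N : ℕ} (h : n < N) :
    ∑ k ∈ range N, (-1) ^ k * ((2 * n - k).choose k : ℤ) * (n - k)! = straightMenage n := by
  rw [← sum_subset (range_subset_range.2 h) fun k _ hk ↦ by
    simp [choose_eq_zero_of_lt (show 2 * n - k < k by simp at hk; omega)]]
  rw [straightMenage, ← sum_range_reflect]
  refine sum_congr rfl fun j hj ↦ ?_
  have hj : j ≤ n := by simpa [Nat.lt_succ_iff] using hj
  rw [straightMenageTerm, succ_sub_one, show 2 * n - (n - j) = n + j by omega,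
    show n - (n - j) = j by omega, show n - j = n + j - 2 * j by omega, choose_symm (by omega),
    show n + j = n + j - 2 * j + 2 * j by omega, pow_add, pow_mul]
  simp

theorem ZMod.natCast_eq_natCast_iff_of_le {m a b : ℕ} (ha : a ≤ m) (hb : b ≤ m) :
    (a : ZMod m) = b ↔ a = b ∨ a = 0 ∧ b = m ∨ a = m ∧ b = 0 := by
  rw [ZMod.natCast_eq_natCast_iff']
  rcases ha.lt_or_eq with ha | rfl <;> rcases hb.lt_or_eq with hb | rfl <;>
    simp [Nat.mod_eq_of_lt, *] <;> omega

/-- Forbidden cell `x` of the ménage board is `(x / 2, (x + 1) / 2)`: cells `2i` and `2i + 1` are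
`(i, i)` and `(i, i + 1)`. -/
def menageRow (m x : ℕ) : ZMod m := (x / 2 : ℕ)

def menageCol (m x : ℕ) : ZMod m := ((x + 1) / 2 : ℕ)

section MenageBoard

variable {m x y : ℕ}

theorem menageRow_eq_iff (hx : x < 2 * m) (hy : y < 2 * m) :
    menageRow m x = menageRow m y ↔ x / 2 = y / 2 := by
  rw [menageRow, menageRow, ZMod.natCast_eq_natCast_iff_of_le (by omega) (by omega)]
  omega

theorem menageCol_eq_iff (hx : x < 2 * m) (hy : y < 2 * m) :
    menageCol m x = menageCol m y ↔
      (x + 1) / 2 = (y + 1) / 2 ∨ x = 0 ∧ y = 2 * m - 1 ∨ x = 2 * m - 1 ∧ y = 0 := by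
  rw [menageCol, menageCol, ZMod.natCast_eq_natCast_iff_of_le (by omega) (by omega)]
  omega

theorem injOn_menageRow_and_menageCol_iff {t : Finset ℕ} (ht : t ⊆ range (2 * m)) :
    Set.InjOn (menageRow m) t ∧ Set.InjOn (menageCol m) t ↔
      (∀ x ∈ t, x + 1 ∉ t) ∧ (0 ∈ t → 2 * m - 1 ∉ t) := by
  have hlt : ∀ x ∈ t, x < 2 * m := fun x hx ↦ mem_range.1 (ht hx)
  constructor
  · rintro ⟨hr, hc⟩
    refine ⟨fun x hx hx1 ↦ ?_, fun h0 h1 ↦ ?_⟩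
    · have := hlt x hx
      have := hlt _ hx1
      by_cases h : x % 2 = 0
      · have := hr hx hx1 ((menageRow_eq_iff (by omega) (by omega)).2 (by omega))
        omega
      · have := hc hx hx1 ((menageCol_eq_iff (by omega) (by omega)).2 (by omega))
        omega
    · have := hlt 0 h0
      have := hc h0 h1 ((menageCol_eq_iff (by omega) (by omega)).2 (by omega))
      omega
  · rintro ⟨hsp, hwrap⟩
    constructor
    · intro x hx y hy h
      rw [menageRow_eq_iff (hlt x hx) (hlt y hy)] at h
      by_contra hne
      rcases (by omega : y = x + 1 ∨ x = y + 1) with rfl | rfl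
      exacts [hsp x hx hy, hsp y hy hx]
    · intro x hx y hy h
      have := hlt x hx
      have := hlt y hy
      rw [menageCol_eq_iff (hlt x hx) (hlt y hy)] at h
      by_contra hne
      rcases (by omega : y = x + 1 ∨ x = y + 1 ∨ x = 0 ∧ y = 2 * m - 1 ∨ y = 0 ∧ x = 2 * m - 1)
        with rfl | rfl | ⟨rfl, rfl⟩ | ⟨rfl, rfl⟩
      exacts [hsp x hx hy, hsp y hy hx, hwrap hx hy, hwrap hy hx]

theorem injOn_menageCell (hm : 2 ≤ m) :
    Set.InjOn (fun x ↦ (menageRow m x, menageCol m x)) (range (2 * m)) := by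
  intro x hx y hy h
  simp only [coe_range, Set.mem_Iio] at hx hy
  have := (menageRow_eq_iff hx hy).1 (congrArg Prod.fst h)
  have := (menageCol_eq_iff hx hy).1 (congrArg Prod.snd h)
  omega

theorem forall_ne_iff_forall_menageCell_ne [NeZero m] (π : Equiv.Perm (ZMod m)) :
    (∀ i, π i ≠ i ∧ π i ≠ i + 1) ↔ ∀ x ∈ range (2 * m), π (menageRow m x) ≠ menageCol m x := by
  constructor
  · intro h x _
    obtain ⟨v, rfl | rfl⟩ := Nat.even_or_odd' x
    · simpa [menageRow, menageCol, show (2 * v + 1) / 2 = v by omega] using (h v).1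
    · simpa [menageRow, menageCol, show (2 * v + 1) / 2 = v by omega,
        show (2 * v + 1 + 1) / 2 = v + 1 by omega] using (h v).2
  · intro h i
    have h₀ := h (2 * i.val) (by simp [i.val_lt])
    have h₁ := h (2 * i.val + 1) (by simp; have := i.val_lt; omega)
    simp [menageRow, menageCol, show (2 * i.val + 1) / 2 = i.val by omega,
      show (2 * i.val + 1 + 1) / 2 = i.val + 1 by omega] at h₀ h₁
    exact ⟨h₀, h₁⟩

theorem menage_eq_sum_cyclicSparseSets (hm : 2 ≤ m) :
    (menage m : ℤ) = ∑ k ∈ range (2 * m + 1),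
      (-1) ^ k * #(cyclicSparseSets (2 * m) k) * ((m - k)! : ℤ) := by
  have : NeZero m := ⟨by omega⟩
  rw [menage, Nat.card_eq_fintype_card, Fintype.card_subtype,
    filter_congr fun π _ ↦ forall_ne_iff_forall_menageCell_ne π,
    Equiv.Perm.card_avoiding_eq_sum _ _ _ (injOn_menageCell hm), card_range, ZMod.card]
  refine sum_congr rfl fun k _ ↦ ?_
  congr 4
  ext t
  rw [mem_filter, mem_powersetCard, mem_cyclicSparseSets]
  constructor
  · rintro ⟨⟨ht, rfl⟩, hinj⟩
    exact ⟨ht, rfl, (injOn_menageRow_and_menageCol_iff ht).1 hinj⟩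
  · rintro ⟨ht, rfl, hsparse⟩
    exact ⟨⟨ht, rfl⟩, (injOn_menageRow_and_menageCol_iff ht).2 hsparse⟩

theorem menage_eq_straightMenage_sub (hm : 2 ≤ m) :
    (menage m : ℤ) = straightMenage m - straightMenage (m - 1) := by
  obtain ⟨M, rfl⟩ : ∃ M, m = M + 1 := ⟨m - 1, by omega⟩
  have h₁ := sum_alternating_choose_eq_straightMenage (show M + 1 < 2 * (M + 1) + 1 by omega)
  have h₂ := sum_alternating_choose_eq_straightMenage (show M < 2 * (M + 1) by omega)
  rw [sum_range_succ'] at h₁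
  rw [menage_eq_sum_cyclicSparseSets hm, sum_range_succ', ← h₁, add_tsub_cancel_right, ← h₂,
    add_sub_right_comm, ← sum_sub_distrib]
  congr 1
  · refine sum_congr rfl fun k _ ↦ ?_
    rw [card_cyclicSparseSets_succ _ _ (by omega), show 2 * (M + 1) - 2 - k = 2 * M - k by omega,
      show M + 1 - (k + 1) = M - k by omega]
    push_cast
    ring
  · simp [cyclicSparseSets, filter_singleton]

end MenageBoard

theorem menage_recurrence (n : ℕ) (hn : 6 ≤ n) :
    (menage n : ℤ) = n * menage (n - 1) + 2 * menage (n - 2)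
      - (n - 4) * menage (n - 3) - menage (n - 4) := by
  obtain ⟨N, rfl⟩ : ∃ N, n = N + 6 := ⟨n - 6, by omega⟩
  simp only [show N + 6 - 1 = N + 5 by omega, show N + 6 - 2 = N + 4 by omega,
    show N + 6 - 3 = N + 3 by omega, show N + 6 - 4 = N + 2 by omega]
  rw [menage_eq_straightMenage_sub (by omega), menage_eq_straightMenage_sub (by omega),
    menage_eq_straightMenage_sub (by omega), menage_eq_straightMenage_sub (by omega),
    menage_eq_straightMenage_sub (by omega)]
  have h₁ := straightMenage_recurrence (N + 3)
  have h₂ := straightMenage_recurrence (N + 2)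
  have h₃ := straightMenage_recurrence (N + 1)
  push_cast at h₁ h₂ h₃ ⊢
  linear_combination h₁ - 2 * h₂ + h₃
end

section
/- For the 'straight-table ménage' board on {1,…,n} with forbidden cells (i,i) for 1 ≤ i ≤ n and (i,i+1) for 1 ≤ i ≤ n-1, the number of k-rook non-attacking placements equals (2n-k choose k). -/
/-- No two cells of `T` share a row or a column. -/
def NonAttacking (T : Finset (ℕ × ℕ)) : Prop :=
  ∀ c ∈ T, ∀ d ∈ T, c ≠ d → c.1 ≠ d.1 ∧ c.2 ≠ d.2

/-- The number of non-attacking placements of `k` rooks on the board `B`. -/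
noncomputable def rookCount (B : Finset (ℕ × ℕ)) (k : ℕ) : ℕ :=
  Nat.card {T : Finset (ℕ × ℕ) // T ⊆ B ∧ T.card = k ∧ NonAttacking T}

/-- The straight-table ménage board: cells (i,i) for 1 ≤ i ≤ n and (i,i+1) for 1 ≤ i ≤ n-1. -/
def straightBoard (n : ℕ) : Finset (ℕ × ℕ) :=
  ((Finset.Icc 1 n).image fun i => (i, i)) ∪
    ((Finset.Icc 1 (n - 1)).image fun i => (i, i + 1))

/-!
Walking along the staircase `(1,1), (1,2), (2,2), (2,3), …` numbers its `2n - 1` cells by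
`0, …, 2n - 2` so that two cells share a row or a column exactly when their numbers are
consecutive. Placements of `k` rooks therefore correspond to `k`-subsets of `{0, …, 2n - 2}` with
no two consecutive elements, and these are counted by `(2n - k).choose k` through the Pascal-type
recursion obtained by asking whether the largest element is used.
-/

open Finset

def NoConsecutive (S : Finset ℕ) : Prop :=
  ∀ a ∈ S, a + 1 ∉ S

instance : DecidablePred NoConsecutive := fun S => by unfold NoConsecutive; infer_instance

instance : DecidablePred NonAttacking := fun T => by unfold NonAttacking; infer_instance

def noConsecutiveSubsets (m k : ℕ) : Finset (Finset ℕ) :=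
  ((range m).powersetCard k).filter NoConsecutive

lemma noConsecutiveSubsets_zero_right (m : ℕ) : noConsecutiveSubsets m 0 = {∅} := by
  simp [noConsecutiveSubsets, NoConsecutive]

lemma noConsecutiveSubsets_zero_succ (k : ℕ) : noConsecutiveSubsets 0 (k + 1) = ∅ := by
  simp [noConsecutiveSubsets]

/-- If the largest admissible element `m` is used then `m - 1` is not; for `m = 0` the truncated
`m - 1 = 0` still gives the right set. -/
lemma noConsecutiveSubsets_succ_succ (m k : ℕ) :
    noConsecutiveSubsets (m + 1) (k + 1) =
      noConsecutiveSubsets m (k + 1) ∪ (noConsecutiveSubsets (m - 1) k).image (insert m) := by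
  ext S
  simp only [noConsecutiveSubsets, mem_union, mem_image, mem_filter, mem_powersetCard,
    NoConsecutive]
  constructor
  · rintro ⟨⟨hS, hcard⟩, hS_sparse⟩
    by_cases hm : m ∈ S
    · refine Or.inr ⟨S.erase m, ⟨⟨fun x hx => ?_, ?_⟩, fun a ha ha1 => ?_⟩, insert_erase hm⟩
      · have hxm := ne_of_mem_erase hx
        have hx' := mem_range.mp (hS (mem_of_mem_erase hx))
        have hxm1 : x + 1 ≠ m := fun h => hS_sparse x (mem_of_mem_erase hx) (h ▸ hm)
        exact mem_range.mpr (by omega)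
      · rw [card_erase_of_mem hm, hcard, Nat.add_sub_cancel]
      · exact hS_sparse a (mem_of_mem_erase ha) (mem_of_mem_erase ha1)
    · refine Or.inl ⟨⟨fun x hx => ?_, hcard⟩, hS_sparse⟩
      have hx' := mem_range.mp (hS hx)
      have hxm : x ≠ m := fun h => hm (h ▸ hx)
      exact mem_range.mpr (by omega)
  · rintro (⟨⟨hS, hcard⟩, hS_sparse⟩ | ⟨T, ⟨⟨hT, hcard⟩, hT_sparse⟩, rfl⟩)
    · exact ⟨⟨hS.trans (range_subset_range.mpr m.le_succ), hcard⟩, hS_sparse⟩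
    · have hmT : m ∉ T := fun h => by have := mem_range.mp (hT h); omega
      refine ⟨⟨insert_subset (mem_range.mpr m.lt_succ_self) fun x hx => ?_, ?_⟩, ?_⟩
      · have := mem_range.mp (hT hx); exact mem_range.mpr (by omega)
      · rw [card_insert_of_notMem hmT, hcard]
      · intro a ha ha1
        rcases mem_insert.mp ha with rfl | ha
        · rcases mem_insert.mp ha1 with h | h
          · omega
          · have := mem_range.mp (hT h); omega
        · have := mem_range.mp (hT ha)
          rcases mem_insert.mp ha1 with h | h
          · omega
          · exact hT_sparse a ha h

lemma card_noConsecutiveSubsets_succ_succ (m k : ℕ) :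
    #(noConsecutiveSubsets (m + 1) (k + 1)) =
      #(noConsecutiveSubsets m (k + 1)) + #(noConsecutiveSubsets (m - 1) k) := by
  have hm_notMem : ∀ T ∈ noConsecutiveSubsets (m - 1) k, m ∉ T := fun T hT hm => by
    have := mem_range.mp ((mem_powersetCard.mp (mem_filter.mp hT).1).1 hm)
    omega
  rw [noConsecutiveSubsets_succ_succ, card_union_of_disjoint, card_image_of_injOn]
  · intro T hT U hU hTU
    simpa [erase_insert (hm_notMem T hT), erase_insert (hm_notMem U hU)]
      using congrArg (erase · m) hTU
  · refine disjoint_left.mpr fun S hS hS' => ?_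
    obtain ⟨T, -, rfl⟩ := mem_image.mp hS'
    have := mem_range.mp ((mem_powersetCard.mp (mem_filter.mp hS).1).1 (mem_insert_self m T))
    omega

theorem card_noConsecutiveSubsets (m k : ℕ) :
    #(noConsecutiveSubsets m k) = (m + 1 - k).choose k := by
  induction m using Nat.strong_induction_on generalizing k with
  | _ m ih =>
    rcases k with _ | k
    · simp [noConsecutiveSubsets_zero_right]
    rcases m with _ | m
    · simp [noConsecutiveSubsets_zero_succ]
    rw [card_noConsecutiveSubsets_succ_succ, ih m m.lt_succ_self, ih (m - 1) (by omega)]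
    rcases k with _ | k
    · simp
    rcases lt_or_ge k m with hkm | hmk
    · rw [show m + 1 + 1 - (k + 1 + 1) = (m - k - 1) + 1 by omega,
        show m + 1 - (k + 1 + 1) = m - k - 1 by omega,
        show m - 1 + 1 - (k + 1) = m - k - 1 by omega,
        Nat.choose_succ_succ', add_comm]
    · rw [Nat.choose_eq_zero_of_lt (by omega), Nat.choose_eq_zero_of_lt (by omega),
        Nat.choose_eq_zero_of_lt (by omega)]

def staircaseCell : ℕ ↪ ℕ × ℕ where
  toFun t := ((t + 2) / 2, (t + 3) / 2)
  inj' a b h := by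
    simp only [Prod.mk.injEq] at h
    omega

@[simp]
lemma staircaseCell_apply (t : ℕ) : staircaseCell t = ((t + 2) / 2, (t + 3) / 2) := rfl

lemma straightBoard_eq_map (n : ℕ) :
    straightBoard n = (range (2 * n - 1)).map staircaseCell := by
  ext ⟨i, j⟩
  simp only [straightBoard, mem_union, mem_image, mem_map, mem_Icc, mem_range, staircaseCell_apply,
    Prod.mk.injEq]
  constructor
  · rintro (⟨a, ⟨h1, h2⟩, rfl, rfl⟩ | ⟨a, ⟨h1, h2⟩, rfl, rfl⟩)
    · exact ⟨2 * a - 2, by omega, by omega, by omega⟩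
    · exact ⟨2 * a - 1, by omega, by omega, by omega⟩
  · rintro ⟨t, ht, rfl, rfl⟩
    rcases Nat.even_or_odd t with ⟨u, rfl⟩ | ⟨u, rfl⟩
    · exact Or.inl ⟨u + 1, ⟨by omega, by omega⟩, by omega, by omega⟩
    · exact Or.inr ⟨u + 1, ⟨by omega, by omega⟩, by omega, by omega⟩

lemma nonAttacking_map_staircaseCell (S : Finset ℕ) :
    NonAttacking (S.map staircaseCell) ↔ NoConsecutive S := by
  simp only [NonAttacking, NoConsecutive, forall_mem_map, staircaseCell_apply,
    ne_eq, Prod.mk.injEq]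
  constructor
  · intro h a ha ha1
    have := h a ha (a + 1) ha1
    omega
  · intro h a ha b hb hab
    have hb1 : b ≠ a + 1 := fun e => h a ha (e ▸ hb)
    have ha1 : a ≠ b + 1 := fun e => h b hb (e ▸ ha)
    omega

lemma rookCount_eq_card_filter (B : Finset (ℕ × ℕ)) (k : ℕ) :
    rookCount B k = #((B.powersetCard k).filter NonAttacking) := by
  rw [rookCount, ← Nat.card_eq_finsetCard]
  exact Nat.card_congr <| Equiv.subtypeEquivRight fun T => by
    simp [mem_powersetCard, and_assoc]

lemma rookCount_map {α : Type*} (f : α ↪ ℕ × ℕ) (s : Finset α) (k : ℕ) :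
    rookCount (s.map f) k = #((s.powersetCard k).filter fun S => NonAttacking (S.map f)) := by
  rw [rookCount_eq_card_filter, powersetCard_map, filter_map, card_map]
  rfl

theorem rookCount_straightBoard (n k : ℕ) :
    rookCount (straightBoard n) k = (2 * n - k).choose k := by
  rw [straightBoard_eq_map, rookCount_map]
  simp_rw [nonAttacking_map_staircaseCell]
  rw [← noConsecutiveSubsets, card_noConsecutiveSubsets]
  rcases n.eq_zero_or_pos with rfl | hn
  · rcases k with _ | k <;> simp
  · rw [show 2 * n - 1 + 1 - k = 2 * n - k by omega]
end

section
/- The number of permutations π of {1,…,n} with π(i) ≠ i and π(i) ≠ i+1 for all i (no wrap-around) equals Σ_{k=0}^{n} (-1)^k (2n-k choose k) (n-k)!. -/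
/-!
Inclusion–exclusion over the cells of the staircase board {(i, i)} ∪ {(i, i + 1)} gives
∑ₖ (-1)ᵏ rₖ (n - k)!, where rₖ counts the placements of k non-attacking rooks on the board: a
placement of size k is a partial bijection, extended by exactly (n - k)! permutations. Numbering the
cells (0,0), (0,1), (1,1), (1,2), … as 0, 1, …, 2n - 2, two cells attack each other iff their
numbers are consecutive, so rₖ is the number of k-subsets of {0, …, 2n - 2} without two consecutive
elements, which is (2n - k choose k).
-/

open Finset Equiv
open scoped Nat

namespace StraightMenage

section Rooks

variable {α : Type*}

def IsNonattacking (t : Finset (α × α)) : Prop :=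
  ∀ c ∈ t, ∀ d ∈ t, c.1 = d.1 ∨ c.2 = d.2 → c = d

instance [DecidableEq α] : DecidablePred (IsNonattacking (α := α)) :=
  fun _ => by unfold IsNonattacking; infer_instance

lemma IsNonattacking.injOn_fst {t : Finset (α × α)} (ht : IsNonattacking t) :
    Set.InjOn Prod.fst (t : Set (α × α)) :=
  fun c hc d hd h => ht c hc d hd (.inl h)

lemma IsNonattacking.injOn_snd {t : Finset (α × α)} (ht : IsNonattacking t) :
    Set.InjOn Prod.snd (t : Set (α × α)) :=
  fun c hc d hd h => ht c hc d hd (.inr h)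

lemma isNonattacking_of_forall_apply_eq {π : Perm α} {t : Finset (α × α)}
    (h : ∀ c ∈ t, π c.1 = c.2) : IsNonattacking t := by
  rintro c hc d hd (hcd | hcd)
  · exact Prod.ext hcd (by rw [← h c hc, ← h d hd, hcd])
  · exact Prod.ext (π.injective (by rw [h c hc, h d hd, hcd])) hcd

lemma IsNonattacking.card_le [Fintype α] {t : Finset (α × α)} (ht : IsNonattacking t) :
    #t ≤ Fintype.card α := by
  simpa using card_le_card_of_injOn Prod.fst (fun _ _ => mem_univ _) ht.injOn_fst

lemma IsNonattacking.exists_perm [Finite α] {t : Finset (α × α)} (ht : IsNonattacking t) :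
    ∃ σ : Perm α, ∀ c ∈ t, σ c.1 = c.2 := by
  classical
  let e := (Set.imageOfInjOn _ _ ht.injOn_fst).symm.trans (Set.imageOfInjOn _ _ ht.injOn_snd)
  refine ⟨e.extendSubtype, fun c hc => ?_⟩
  have hc1 : c.1 ∈ Prod.fst '' (t : Set (α × α)) := ⟨c, hc, rfl⟩
  have : (Set.imageOfInjOn _ _ ht.injOn_fst).symm ⟨c.1, hc1⟩ = ⟨c, hc⟩ := by
    rw [Equiv.symm_apply_eq]; rfl
  rw [e.extendSubtype_apply_of_mem _ hc1]
  simp only [e, Equiv.trans_apply, this]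
  rfl

variable [Fintype α] [DecidableEq α]

lemma card_perm_fixing_pointwise (s : Finset α) :
    #{ρ : Perm α | ∀ x ∈ s, ρ x = x} = (Fintype.card α - #s)! := by
  have := Fintype.card_congr (Perm.subtypeEquivSubtypePerm (· ∉ s))
  rw [Fintype.card_perm, Fintype.card_subtype_compl, Fintype.card_coe] at this
  rw [this, Fintype.card_subtype]
  simp only [not_not]

lemma IsNonattacking.card_perm_extending {t : Finset (α × α)} (ht : IsNonattacking t) :
    #{π : Perm α | ∀ c ∈ t, π c.1 = c.2} = (Fintype.card α - #t)! := by
  obtain ⟨σ, hσ⟩ := ht.exists_perm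
  rw [← card_image_of_injOn ht.injOn_fst, ← card_perm_fixing_pointwise]
  refine card_nbij' (σ⁻¹ * ·) (σ * ·) ?_ ?_ (fun π _ => by simp) (fun ρ _ => by simp)
  · intro π hπ
    simp only [mem_coe, mem_filter, mem_univ, true_and, forall_mem_image] at hπ ⊢
    intro c hc
    rw [Perm.mul_apply, hπ c hc, ← hσ c hc]; exact σ.symm_apply_apply c.1
  · intro ρ hρ
    simp only [mem_coe, mem_filter, mem_univ, true_and, forall_mem_image] at hρ ⊢
    intro c hc
    rw [Perm.mul_apply, hρ hc, hσ c hc]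

def rookNumber (B : Finset (α × α)) (k : ℕ) : ℕ := #{t ∈ B.powersetCard k | IsNonattacking t}

lemma card_perm_extending_eq_ite (t : Finset (α × α)) :
    #{π : Perm α | ∀ c ∈ t, π c.1 = c.2} =
      if IsNonattacking t then (Fintype.card α - #t)! else 0 := by
  split_ifs with ht
  · exact ht.card_perm_extending
  · exact card_eq_zero.2 <| filter_eq_empty_iff.2 fun π _ h =>
      ht (isNonattacking_of_forall_apply_eq h)

theorem card_perm_avoiding_eq_sum_rookNumber (B : Finset (α × α)) :
    (#{π : Perm α | ∀ c ∈ B, π c.1 ≠ c.2} : ℤ) =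
      ∑ k ∈ range (Fintype.card α + 1),
        (-1 : ℤ) ^ k * rookNumber B k * (Fintype.card α - k)! := by
  let S : α × α → Finset (Perm α) := fun c => {π : Perm α | π c.1 = c.2}
  have hinf (t : Finset (α × α)) :
      t.inf S = ({π | ∀ c ∈ t, π c.1 = c.2} : Finset (Perm α)) := by
    ext π; simp [S, Finset.mem_inf]
  have hinf_compl :
      B.inf (fun c => (S c)ᶜ) = ({π | ∀ c ∈ B, π c.1 ≠ c.2} : Finset (Perm α)) := by
    ext π; simp [S, Finset.mem_inf]
  have hcard : ∀ t ∈ {t ∈ B.powerset | IsNonattacking t}, #t ∈ range (Fintype.card α + 1) :=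
    fun t ht => mem_range_succ_iff.2 (mem_filter.1 ht).2.card_le
  rw [← hinf_compl, inclusion_exclusion_card_inf_compl]
  simp only [hinf, card_perm_extending_eq_ite, Nat.cast_ite, Nat.cast_zero, mul_ite, mul_zero]
  rw [← sum_filter,
    ← sum_fiberwise_of_maps_to' hcard fun k => (-1 : ℤ) ^ k * ((Fintype.card α - k)! : ℤ)]
  refine sum_congr rfl fun k _ => ?_
  rw [sum_const, nsmul_eq_mul, rookNumber, filter_filter, powersetCard_eq_filter, filter_filter]
  simp_rw [and_comm]
  ring

end Rooks

lemma card_filter_powersetCard_image {α β : Type*} [DecidableEq β] {s : Finset α} {f : α → β}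
    (hf : Set.InjOn f s) (k : ℕ) (P : Finset β → Prop) [DecidablePred P] :
    #{u ∈ (s.image f).powersetCard k | P u} = #{t ∈ s.powersetCard k | P (t.image f)} := by
  classical
  symm
  refine card_nbij (·.image f) ?_ ?_ ?_
  · intro t ht
    simp only [mem_coe, mem_filter, mem_powersetCard] at ht ⊢
    refine ⟨⟨image_subset_image ht.1.1, ?_⟩, ht.2⟩
    rw [card_image_of_injOn (hf.mono ht.1.1), ht.1.2]
  · exact (image_injOn_powerset_of_injOn hf).mono fun t ht => by
      simp only [mem_coe, mem_filter, mem_powersetCard] at ht; exact mem_powerset.2 ht.1.1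
  · intro u hu
    simp only [mem_coe, mem_filter, mem_powersetCard] at hu
    obtain ⟨t, hts, rfl⟩ := subset_image_iff.1 hu.1.1
    refine ⟨t, ?_, rfl⟩
    simp only [mem_coe, mem_filter, mem_powersetCard]
    refine ⟨⟨hts, ?_⟩, hu.2⟩
    rw [← card_image_of_injOn (hf.mono hts), hu.1.2]

def IsSeparated (J : Finset ℕ) : Prop := ∀ a ∈ J, a + 1 ∉ J

instance : DecidablePred IsSeparated := fun _ => by unfold IsSeparated; infer_instance

-- Split according to whether `m + 1 ∈ J`; if it is, `J = insert (m + 1) K` with `m ∉ K`.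
lemma card_isSeparated_powersetCard_range_add_two (m k : ℕ) :
    #{J ∈ (range (m + 2)).powersetCard (k + 1) | IsSeparated J} =
      #{J ∈ (range (m + 1)).powersetCard (k + 1) | IsSeparated J} +
        #{J ∈ (range m).powersetCard k | IsSeparated J} := by
  rw [range_add_one (n := m + 1), powersetCard_succ_insert notMem_range_self, filter_union,
    card_union_of_disjoint, filter_image, card_image_of_injOn]
  · congr 1
    refine congrArg card (Finset.ext fun K => ?_)
    rw [mem_filter, mem_filter]
    simp only [mem_powersetCard, IsSeparated, forall_eq_or_imp, mem_insert, not_or, subset_iff,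
      mem_range]
    constructor
    · rintro ⟨⟨hK, hk⟩, -, hsep⟩
      exact ⟨⟨fun a ha => by have := hK ha; have := (hsep a ha).1; omega, hk⟩,
        fun a ha => (hsep a ha).2⟩
    · rintro ⟨⟨hK, hk⟩, hsep⟩
      refine ⟨⟨fun a ha => by have := hK ha; omega, hk⟩,
        ⟨by omega, fun h => by have := hK h; omega⟩,
        fun a ha => ⟨by have := hK ha; omega, hsep a ha⟩⟩
  · intro K hK L hL hKL
    simp only [mem_coe, mem_filter, mem_powersetCard] at hK hL
    rw [← erase_insert (notMem_range_self.imp (hK.1.1 ·)), hKL,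
      erase_insert (notMem_range_self.imp (hL.1.1 ·))]
  · refine disjoint_filter_filter (disjoint_left.2 fun J hJ hJ' => ?_)
    obtain ⟨K, -, rfl⟩ := mem_image.1 hJ'
    exact notMem_range_self ((mem_powersetCard.1 hJ).1 (mem_insert_self _ _))

theorem card_isSeparated_powersetCard_range :
    ∀ m k : ℕ, #{J ∈ (range m).powersetCard k | IsSeparated J} = (m + 1 - k).choose k
  | m, 0 => by rw [powersetCard_zero, Nat.choose_zero_right]; decide
  | 0, k + 1 => by simp
  | 1, 1 => by decide
  | 1, k + 2 => by simp [powersetCard_eq_empty.2]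
  | m + 2, k + 1 => by
    rw [card_isSeparated_powersetCard_range_add_two, card_isSeparated_powersetCard_range (m + 1),
      card_isSeparated_powersetCard_range m]
    rcases le_or_gt k m with hkm | hmk
    · rw [show m + 2 + 1 - (k + 1) = (m - k) + 1 + 1 by omega,
        show m + 1 + 1 - (k + 1) = m - k + 1 by omega, show m + 1 - k = m - k + 1 by omega,
        Nat.choose_succ_succ' (m - k + 1), add_comm]
    · rw [Nat.choose_eq_zero_of_lt (show m + 1 + 1 - (k + 1) < k + 1 by omega),
        Nat.choose_eq_zero_of_lt (show m + 1 - k < k by omega),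
        Nat.choose_eq_zero_of_lt (show m + 2 + 1 - (k + 1) < k + 1 by omega)]

section Staircase

def staircaseBoard (n : ℕ) : Finset (Fin n × Fin n) :=
  {c | (c.2 : ℕ) = c.1 ∨ (c.2 : ℕ) = c.1 + 1}

def staircaseIndex {n : ℕ} (c : Fin n × Fin n) : ℕ := c.1 + c.2

variable {n : ℕ}

lemma mem_staircaseBoard {c : Fin n × Fin n} :
    c ∈ staircaseBoard n ↔ (c.2 : ℕ) = c.1 ∨ (c.2 : ℕ) = c.1 + 1 := by
  simp [staircaseBoard]

lemma staircaseIndex_injOn :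
    Set.InjOn staircaseIndex (staircaseBoard n : Set (Fin n × Fin n)) := by
  intro c hc d hd h
  rw [mem_coe, mem_staircaseBoard] at hc hd
  unfold staircaseIndex at h
  ext <;> omega

lemma image_staircaseIndex_staircaseBoard :
    (staircaseBoard n).image staircaseIndex = range (2 * n - 1) := by
  ext a
  simp only [mem_image, mem_staircaseBoard, mem_range, staircaseIndex]
  constructor
  · rintro ⟨c, hc, rfl⟩
    have := c.1.isLt
    have := c.2.isLt
    omega
  · intro ha
    exact ⟨(⟨a / 2, by omega⟩, ⟨(a + 1) / 2, by omega⟩), by simp only; omega, by simp only; omega⟩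

lemma fst_eq_or_snd_eq_iff_staircaseIndex_succ {c d : Fin n × Fin n} (hc : c ∈ staircaseBoard n)
    (hd : d ∈ staircaseBoard n) (hcd : c ≠ d) :
    c.1 = d.1 ∨ c.2 = d.2 ↔ staircaseIndex c + 1 = staircaseIndex d ∨
      staircaseIndex d + 1 = staircaseIndex c := by
  rw [mem_staircaseBoard] at hc hd
  rw [Ne, Prod.ext_iff, Fin.ext_iff, Fin.ext_iff] at hcd
  simp only [staircaseIndex, Fin.ext_iff]
  omega

lemma isNonattacking_iff_isSeparated {t : Finset (Fin n × Fin n)} (ht : t ⊆ staircaseBoard n) :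
    IsNonattacking t ↔ IsSeparated (t.image staircaseIndex) := by
  constructor
  · intro h a ha ha'
    obtain ⟨c, hc, rfl⟩ := mem_image.1 ha
    obtain ⟨d, hd, hcd⟩ := mem_image.1 ha'
    have hcd' : c ≠ d := fun h => by subst h; omega
    exact hcd' <| h c hc d hd <|
      (fst_eq_or_snd_eq_iff_staircaseIndex_succ (ht hc) (ht hd) hcd').2 (.inl hcd.symm)
  · intro h c hc d hd hcd
    by_contra hne
    rcases (fst_eq_or_snd_eq_iff_staircaseIndex_succ (ht hc) (ht hd) hne).1 hcd with hadj | hadj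
    · exact h _ (mem_image_of_mem _ hc) (hadj ▸ mem_image_of_mem _ hd)
    · exact h _ (mem_image_of_mem _ hd) (hadj ▸ mem_image_of_mem _ hc)

lemma forall_mem_staircaseBoard_apply_ne_iff (π : Perm (Fin n)) :
    (∀ c ∈ staircaseBoard n, π c.1 ≠ c.2) ↔ ∀ i, π i ≠ i ∧ (π i : ℕ) ≠ i + 1 := by
  constructor
  · intro h i
    exact ⟨fun he => h (i, π i) (mem_staircaseBoard.2 (.inl (congrArg _ he))) rfl,
      fun he => h (i, π i) (mem_staircaseBoard.2 (.inr he)) rfl⟩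
  · rintro h c hc he
    rcases mem_staircaseBoard.1 hc with hc | hc
    · exact (h c.1).1 (by rw [he]; exact Fin.ext hc)
    · exact (h c.1).2 (by rw [he]; exact hc)

lemma rookNumber_staircaseBoard (k : ℕ) :
    rookNumber (staircaseBoard n) k = (2 * n - k).choose k := by
  have hsep : rookNumber (staircaseBoard n) k =
      #{t ∈ (staircaseBoard n).powersetCard k | IsSeparated (t.image staircaseIndex)} :=
    congrArg card <| filter_congr fun t ht =>
      isNonattacking_iff_isSeparated (mem_powersetCard.1 ht).1
  rw [hsep, ← card_filter_powersetCard_image staircaseIndex_injOn,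
    image_staircaseIndex_staircaseBoard, card_isSeparated_powersetCard_range]
  rcases n.eq_zero_or_pos with rfl | hn
  · cases k <;> simp
  · rw [show 2 * n - 1 + 1 - k = 2 * n - k by omega]

end Staircase

end StraightMenage

open StraightMenage in
theorem straight_menage_formula (n : ℕ) :
    (Nat.card {π : Equiv.Perm (Fin n) //
        ∀ i, π i ≠ i ∧ ((π i : ℕ) ≠ (i : ℕ) + 1)} : ℤ) =
      ∑ k ∈ Finset.range (n + 1),
        (-1 : ℤ) ^ k * (2 * n - k).choose k * (n - k).factorial := by
  simp_rw [Nat.card_eq_fintype_card, Fintype.card_subtype,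
    ← forall_mem_staircaseBoard_apply_ne_iff, card_perm_avoiding_eq_sum_rookNumber,
    rookNumber_staircaseBoard, Fintype.card_fin]
end

section
/- Let f(n) be the number of permutations π of {1,…,n} with |π(i) - i| ∈ {1,2} for all i. Then Σ_{n≥0} f(n) x^n = (1-x)/(1 - x - x² - x³ - x⁴ + x⁵). -/
/-!
Work with permutations of `ℤ` supported in an interval `[a, b)`, so that intervals can be
translated. Let `f n` count the admissible permutations of `[0, n)` and `r n` those with
`g 0 = 1`; by inversion `r n` also counts those with `g 1 = 0`. Sorting an admissible `g` by
its first few values and multiplying on the right by a fixed permutation of `{0, 1, 2, 3}`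
strips off an initial block and gives
  `f (m + 4) = r (m + 4) + f (m + 1) + r (m + 2) + f m`,
  `r (m + 3) = f (m + 1) + f m + r (m + 1)`.
Eliminating `r` leaves `f (m + 6) + f m = 2 (f (m + 4) + f (m + 3) + f (m + 2))`, whose
characteristic polynomial is `(1 + x) (1 - x - x² - x³ - x⁴ + x⁵)`. Cancelling `1 + X` in
`ℚ⟦X⟧` and checking `f 0, …, f 5 = 1, 0, 1, 2, 4, 6` gives the identity.
-/

open Equiv PowerSeries

namespace ShortDisplacement

def IsShortStep (d : ℤ) : Prop := d = 1 ∨ d = 2 ∨ d = -1 ∨ d = -2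

instance : DecidablePred IsShortStep := fun _ => inferInstanceAs (Decidable (_ ∨ _))

theorem isShortStep_neg {d : ℤ} : IsShortStep (-d) ↔ IsShortStep d := by
  unfold IsShortStep
  omega

def IsAdmissible (a b : ℤ) (g : Perm ℤ) : Prop :=
  (∀ i, ¬(a ≤ i ∧ i < b) → g i = i) ∧ ∀ i, a ≤ i → i < b → IsShortStep (g i - i)

noncomputable def admissibleCount (n : ℕ) : ℕ :=
  Nat.card {g : Perm ℤ // IsAdmissible 0 n g}

noncomputable def risingCount (n : ℕ) : ℕ :=
  Nat.card {g : Perm ℤ // IsAdmissible 0 n g ∧ g 0 = 1}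

theorem apply_mem_Ico {a b : ℤ} {g : Perm ℤ} (hfix : ∀ i, ¬(a ≤ i ∧ i < b) → g i = i) {i : ℤ}
    (hi : a ≤ i ∧ i < b) : a ≤ g i ∧ g i < b := by
  by_contra h
  rw [g.injective (hfix _ h)] at h
  exact h hi

namespace IsAdmissible

variable {a b : ℤ} {g : Perm ℤ}

theorem inv (hg : IsAdmissible a b g) : IsAdmissible a b g⁻¹ := by
  have hfix : ∀ i, ¬(a ≤ i ∧ i < b) → g⁻¹ i = i := fun i hi => by
    rw [Perm.inv_eq_iff_eq, hg.1 i hi]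
  refine ⟨hfix, fun i h1 h2 => ?_⟩
  have := hg.2 _ (apply_mem_Ico hfix ⟨h1, h2⟩).1 (apply_mem_Ico hfix ⟨h1, h2⟩).2
  rwa [Perm.eq_inv_iff_eq.mp rfl, ← isShortStep_neg, neg_sub] at this

theorem exists_apply_eq (hg : IsAdmissible a b g) {v : ℤ} (hv : a ≤ v ∧ v < b) :
    ∃ j, g j = v ∧ a ≤ j ∧ j < b ∧ IsShortStep (v - j) := by
  obtain ⟨h1, h2⟩ := apply_mem_Ico hg.inv.1 hv
  refine ⟨g⁻¹ v, Perm.eq_inv_iff_eq.mp rfl, h1, h2, ?_⟩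
  rw [← isShortStep_neg, neg_sub]
  exact hg.inv.2 v hv.1 hv.2

theorem apply_one_cases (hg : IsAdmissible 0 b g) (hb : 3 ≤ b) :
    g 1 = 0 ∨ (g 1 = 2 ∧ g 2 = 0) ∨ (g 1 = 3 ∧ g 2 = 0) := by
  obtain ⟨j, hj, hj0, hjb, hjs⟩ := hg.exists_apply_eq (v := 0) ⟨le_rfl, by omega⟩
  have h1 := hg.2 1 (by norm_num) (by omega)
  have h1' := apply_mem_Ico hg.1 (i := 1) ⟨by norm_num, by omega⟩
  have h12 : g 1 ≠ g 2 := g.injective.ne (by norm_num)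
  unfold IsShortStep at hjs h1
  obtain rfl | rfl : j = 1 ∨ j = 2 := by omega
  all_goals omega

theorem prefix_cases (hg : IsAdmissible 0 b g) (hb : 4 ≤ b) :
    g 0 = 1 ∨ (g 0 = 2 ∧ g 1 = 0 ∧ g 2 = 1) ∨ (g 0 = 2 ∧ g 1 = 0 ∧ g 3 = 1) ∨
      (g 0 = 2 ∧ g 1 = 3 ∧ g 2 = 0 ∧ g 3 = 1) := by
  obtain ⟨j, hj, hj0, hjb, hjs⟩ := hg.exists_apply_eq (v := 0) ⟨le_rfl, by omega⟩
  obtain ⟨k, hk, hk0, hkb, hks⟩ := hg.exists_apply_eq (v := 1) ⟨by norm_num, by omega⟩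
  have h0 := hg.2 0 le_rfl (by omega)
  have h0' := apply_mem_Ico hg.1 (i := 0) ⟨le_rfl, by omega⟩
  have h1 := hg.2 1 (by norm_num) (by omega)
  have h1' := apply_mem_Ico hg.1 (i := 1) ⟨by norm_num, by omega⟩
  have h01 : g 0 ≠ g 1 := g.injective.ne (by norm_num)
  have h02 : g 0 ≠ g 2 := g.injective.ne (by norm_num)
  have h12 : g 1 ≠ g 2 := g.injective.ne (by norm_num)
  unfold IsShortStep at hjs hks h0 h1
  obtain rfl | rfl : j = 1 ∨ j = 2 := by omega
  all_goals obtain rfl | rfl | rfl : k = 0 ∨ k = 2 ∨ k = 3 := by omega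
  all_goals omega

end IsAdmissible

theorem isAdmissible_inv_iff {a b : ℤ} {g : Perm ℤ} :
    IsAdmissible a b g⁻¹ ↔ IsAdmissible a b g :=
  ⟨fun h => inv_inv g ▸ h.inv, IsAdmissible.inv⟩

instance finite_isAdmissible (a b : ℤ) : Finite {g : Perm ℤ // IsAdmissible a b g} := by
  have : Finite {i : ℤ // a ≤ i ∧ i < b} := (Set.finite_Ico a b).to_subtype
  have := Finite.of_equiv _ (Perm.subtypeEquivSubtypePerm fun i => a ≤ i ∧ i < b)
  exact Finite.of_injective (β := {g : Perm ℤ // ∀ i, ¬(a ≤ i ∧ i < b) → g i = i})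
    (fun g => ⟨g.1, g.2.1⟩) fun _ _ h => Subtype.ext (Subtype.mk.inj h)

instance finite_isAdmissible_and (a b : ℤ) (Q : Perm ℤ → Prop) :
    Finite {g : Perm ℤ // IsAdmissible a b g ∧ Q g} :=
  Finite.of_injective (fun g => (⟨g.1, g.2.1⟩ : {g : Perm ℤ // IsAdmissible a b g}))
    fun _ _ h => Subtype.ext (Subtype.mk.inj h)

theorem card_and_or {α : Type*} {V A B : α → Prop} [Finite {x // V x ∧ (A x ∨ B x)}]
    (hAB : ∀ x, V x → A x → ¬B x) :
    Nat.card {x // V x ∧ (A x ∨ B x)} =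
      Nat.card {x // V x ∧ A x} + Nat.card {x // V x ∧ B x} := by
  classical
  have e := (subtypeEquivRight fun x => and_or_left).trans
    (subtypeOrEquiv (fun x => V x ∧ A x) (fun x => V x ∧ B x)
      (Pi.disjoint_iff.2 fun x => Prop.disjoint_iff.2 fun h => hAB x h.1.1 h.1.2 h.2.2))
  have := Finite.of_equiv _ e
  have := Finite.sum_left (α := {x // V x ∧ A x}) {x // V x ∧ B x}
  have := Finite.sum_right (β := {x // V x ∧ B x}) {x // V x ∧ A x}
  rw [Nat.card_congr e, Nat.card_sum]

def shift (c : ℤ) : Perm ℤ ≃ Perm ℤ := permCongr (Equiv.subRight c)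

theorem shift_apply (c : ℤ) (g : Perm ℤ) (x : ℤ) : shift c g x = g (x + c) - c := rfl

theorem isAdmissible_shift {a b c : ℤ} {g : Perm ℤ} :
    IsAdmissible a b (shift c g) ↔ IsAdmissible (a + c) (b + c) g := by
  simp only [IsAdmissible, shift_apply, IsShortStep]
  constructor
  · rintro ⟨hfix, hstep⟩
    refine ⟨fun i hi => ?_, fun i h1 h2 => ?_⟩
    · have := hfix (i - c) (by omega)
      rw [sub_add_cancel] at this
      omega
    · have := hstep (i - c) (by omega) (by omega)
      rw [sub_add_cancel] at this
      omega
  · rintro ⟨hfix, hstep⟩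
    refine ⟨fun i hi => ?_, fun i h1 h2 => ?_⟩
    · rw [hfix _ (by omega)]
      ring
    · have := hstep (i + c) (by omega) (by omega)
      omega

theorem card_isAdmissible {a b : ℤ} (n : ℕ) (hb : b = a + n) :
    Nat.card {g // IsAdmissible a b g} = admissibleCount n :=
  Nat.card_congr ((shift a).subtypeEquiv fun g => by
    rw [isAdmissible_shift, zero_add, hb, add_comm])

theorem card_isAdmissible_rising {a b : ℤ} (n : ℕ) (hb : b = a + n) :
    Nat.card {g // IsAdmissible a b g ∧ g a = a + 1} = risingCount n :=
  Nat.card_congr ((shift a).subtypeEquiv fun g => by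
    rw [isAdmissible_shift, shift_apply, zero_add, hb, add_comm (n : ℤ) a]
    exact and_congr_right' (by omega))

theorem card_isAdmissible_falling {a b : ℤ} (n : ℕ) (hb : b = a + n) :
    Nat.card {g // IsAdmissible a b g ∧ g (a + 1) = a} = risingCount n := by
  rw [← card_isAdmissible_rising n hb]
  exact Nat.card_congr ((Equiv.inv _).subtypeEquiv fun g => by
    rw [inv_apply, isAdmissible_inv_iff, Perm.inv_eq_iff_eq, eq_comm])

/-- Right multiplication by `c` strips a prefix: if `g` takes the value `p i` at `c i` for
`i ∈ P`, then `g * c` fixes `[0, a)` and keeps only the prescriptions at points `i ≥ a`. -/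
theorem isAdmissible_mul_right_iff {a b : ℤ} {c : Perm ℤ} {P : Finset ℤ} {p : ℤ → ℤ}
    (hc : ∀ i ∉ P, c i = i) (hP : ∀ i ∈ P, 0 ≤ i ∧ i < b) (ha : 0 ≤ a)
    (hprefix : ∀ i ∈ Finset.Ico 0 a, i ∈ P ∧ p i = i)
    (hstep : ∀ i ∈ P, IsShortStep (p i - c i) ∧ (a ≤ i → IsShortStep (p i - i)))
    (g : Perm ℤ) :
    (IsAdmissible 0 b g ∧ ∀ i ∈ P, g (c i) = p i) ↔
      (IsAdmissible a b (g * c) ∧ ∀ i ∈ P, a ≤ i → (g * c) i = p i) := by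
  have hcP : ∀ i ∈ P, c i ∈ P := fun i hi => by
    by_contra h
    rw [c.injective (hc _ h)] at h
    exact h hi
  replace hprefix : ∀ i, 0 ≤ i → i < a → i ∈ P ∧ p i = i :=
    fun i h1 h2 => hprefix i (Finset.mem_Ico.2 ⟨h1, h2⟩)
  simp only [IsAdmissible, Perm.mul_apply]
  constructor
  · rintro ⟨⟨hfix, hst⟩, hpat⟩
    refine ⟨⟨fun i hi => ?_, fun i h1 h2 => ?_⟩, fun i hi _ => hpat i hi⟩
    · by_cases hiP : i ∈ P
      · have := hP i hiP
        rw [hpat i hiP, (hprefix i this.1 (by omega)).2]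
      · rw [hc i hiP]
        exact hfix i fun h => hiP (hprefix i h.1 (by omega)).1
    · by_cases hiP : i ∈ P
      · rw [hpat i hiP]
        exact (hstep i hiP).2 h1
      · rw [hc i hiP]
        exact hst i (by omega) h2
  · rintro ⟨⟨hfix, hst⟩, hpat⟩
    have hpat' : ∀ i ∈ P, g (c i) = p i := fun i hi => by
      by_cases hai : a ≤ i
      · exact hpat i hi hai
      · have := hP i hi
        rw [hfix i (by omega), (hprefix i this.1 (by omega)).2]
    refine ⟨⟨fun j hj => ?_, fun j h1 h2 => ?_⟩, hpat'⟩ <;> obtain ⟨i, rfl⟩ := c.surjective j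
    · by_cases hiP : i ∈ P
      · exact absurd (hP _ (hcP i hiP)) hj
      · rw [hc i hiP] at hj ⊢
        simpa only [hc i hiP] using hfix i (by omega)
    · by_cases hiP : i ∈ P
      · rw [hpat' i hiP]
        exact (hstep i hiP).1
      · rw [hc i hiP] at h1 h2 ⊢
        have hai : a ≤ i := not_lt.1 fun h => hiP (hprefix i h1 h).1
        simpa only [hc i hiP] using hst i hai h2

theorem card_isAdmissible_mul_right {Q R : Perm ℤ → Prop} {a b : ℤ} (c : Perm ℤ) (P : Finset ℤ)
    (p : ℤ → ℤ) (hc : ∀ i ∉ P, c i = i) (hP : ∀ i ∈ P, 0 ≤ i ∧ i < b) (ha : 0 ≤ a)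
    (hprefix : ∀ i ∈ Finset.Ico 0 a, i ∈ P ∧ p i = i)
    (hstep : ∀ i ∈ P, IsShortStep (p i - c i) ∧ (a ≤ i → IsShortStep (p i - i)))
    (hQ : ∀ g, Q g ↔ ∀ i ∈ P, g (c i) = p i) (hR : ∀ h, R h ↔ ∀ i ∈ P, a ≤ i → h i = p i) :
    Nat.card {g // IsAdmissible 0 b g ∧ Q g} = Nat.card {h // IsAdmissible a b h ∧ R h} :=
  Nat.card_congr ((Equiv.mulRight c).subtypeEquiv fun g => by
    rw [hQ, coe_mulRight, hR]
    exact isAdmissible_mul_right_iff hc hP ha hprefix hstep g)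

theorem card_prefix_one_zero {b : ℤ} (m : ℕ) (hb : b = m + 2) :
    Nat.card {g // IsAdmissible 0 b g ∧ g 0 = 1 ∧ g 1 = 0} = admissibleCount m := by
  rw [card_isAdmissible_mul_right (a := 2) (R := fun _ => True) (swap 0 1) {0, 1} id
    (fun i hi => by simp_all [swap_apply_of_ne_of_ne]) (by simp [hb]; omega)
    (by norm_num) (by decide) (by decide) (fun g => by simp [and_comm]) (by simp)]
  simpa using card_isAdmissible m (by omega)

theorem card_prefix_one_two_zero {b : ℤ} (m : ℕ) (hb : b = m + 3) :
    Nat.card {g // IsAdmissible 0 b g ∧ g 0 = 1 ∧ g 1 = 2 ∧ g 2 = 0} = admissibleCount m := by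
  rw [card_isAdmissible_mul_right (a := 3) (R := fun _ => True) (swap 0 1 * swap 0 2)
    {0, 1, 2} id (fun i hi => by simp_all [swap_apply_of_ne_of_ne]) (by simp [hb]; omega)
    (by norm_num) (by decide) (by decide)
    (fun g => by simp [swap_apply_of_ne_of_ne]; tauto) (by simp)]
  simpa using card_isAdmissible m (by omega)

theorem card_prefix_one_three_zero {b : ℤ} (m : ℕ) (hb : b = m + 3) :
    Nat.card {g // IsAdmissible 0 b g ∧ g 0 = 1 ∧ g 1 = 3 ∧ g 2 = 0} = risingCount (m + 1) := by
  rw [card_isAdmissible_mul_right (a := 2) (R := fun h => h 2 = 2 + 1) (swap 0 1 * swap 0 2)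
    {0, 1, 2} (fun i => if i = 2 then 3 else i)
    (fun i hi => by simp_all [swap_apply_of_ne_of_ne]) (by simp [hb]; omega)
    (by norm_num) (by decide) (by decide)
    (fun g => by simp [swap_apply_of_ne_of_ne]; tauto) (by simp)]
  exact card_isAdmissible_rising (m + 1) (by omega)

theorem card_prefix_two_zero_one {b : ℤ} (m : ℕ) (hb : b = m + 3) :
    Nat.card {g // IsAdmissible 0 b g ∧ g 0 = 2 ∧ g 1 = 0 ∧ g 2 = 1} = admissibleCount m := by
  rw [card_isAdmissible_mul_right (a := 3) (R := fun _ => True) (swap 0 1 * swap 1 2)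
    {0, 1, 2} id (fun i hi => by simp_all [swap_apply_of_ne_of_ne]) (by simp [hb]; omega)
    (by norm_num) (by decide) (by decide)
    (fun g => by simp [swap_apply_of_ne_of_ne]; tauto) (by simp)]
  simpa using card_isAdmissible m (by omega)

theorem card_prefix_two_zero_gap_one {b : ℤ} (m : ℕ) (hb : b = m + 4) :
    Nat.card {g // IsAdmissible 0 b g ∧ g 0 = 2 ∧ g 1 = 0 ∧ g 3 = 1} = risingCount (m + 2) := by
  rw [card_isAdmissible_mul_right (a := 2) (R := fun h => h (2 + 1) = 2) (swap 0 1 * swap 1 3)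
    {0, 1, 3} (fun i => if i = 3 then 2 else i)
    (fun i hi => by simp_all [swap_apply_of_ne_of_ne]) (by simp [hb]; omega)
    (by norm_num) (by decide) (by decide)
    (fun g => by simp [swap_apply_of_ne_of_ne]; tauto) (by simp)]
  exact card_isAdmissible_falling (m + 2) (by omega)

theorem card_prefix_two_three_zero_one {b : ℤ} (m : ℕ) (hb : b = m + 4) :
    Nat.card {g // IsAdmissible 0 b g ∧ g 0 = 2 ∧ g 1 = 3 ∧ g 2 = 0 ∧ g 3 = 1} =
      admissibleCount m := by
  rw [card_isAdmissible_mul_right (a := 4) (R := fun _ => True) (swap 0 2 * swap 1 3)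
    {0, 1, 2, 3} id (fun i hi => by simp_all [swap_apply_of_ne_of_ne]) (by simp [hb]; omega)
    (by norm_num) (by decide) (by decide)
    (fun g => by simp [swap_apply_of_ne_of_ne]; tauto) (by simp)]
  simpa using card_isAdmissible m (by omega)

theorem risingCount_add_three (m : ℕ) :
    risingCount (m + 3) = admissibleCount (m + 1) + admissibleCount m + risingCount (m + 1) := by
  calc risingCount (m + 3)
      = Nat.card {g // IsAdmissible 0 (m + 3 : ℕ) g ∧ ((g 0 = 1 ∧ g 1 = 0) ∨
          (g 0 = 1 ∧ g 1 = 2 ∧ g 2 = 0) ∨ (g 0 = 1 ∧ g 1 = 3 ∧ g 2 = 0))} :=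
        Nat.card_congr <| subtypeEquivRight fun g => and_congr_right fun hg =>
          ⟨fun h0 => by have := hg.apply_one_cases (by omega); omega, fun h => by omega⟩
    _ = _ := by
      rw [card_and_or (fun _ _ => by omega), card_and_or (fun _ _ => by omega),
        card_prefix_one_zero (m + 1) (by omega), card_prefix_one_two_zero m (by omega),
        card_prefix_one_three_zero m (by omega), add_assoc]

theorem admissibleCount_add_four (m : ℕ) :
    admissibleCount (m + 4) =
      risingCount (m + 4) + admissibleCount (m + 1) + risingCount (m + 2) + admissibleCount m := by
  calc admissibleCount (m + 4)
      = Nat.card {g // IsAdmissible 0 (m + 4 : ℕ) g ∧ (g 0 = 1 ∨ (g 0 = 2 ∧ g 1 = 0 ∧ g 2 = 1) ∨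
          (g 0 = 2 ∧ g 1 = 0 ∧ g 3 = 1) ∨ (g 0 = 2 ∧ g 1 = 3 ∧ g 2 = 0 ∧ g 3 = 1))} :=
        Nat.card_congr <| subtypeEquivRight fun g =>
          (and_iff_left_of_imp fun hg => hg.prefix_cases (by omega)).symm
    _ = _ := by
      have h23 (g : Perm ℤ) : g 2 ≠ g 3 := g.injective.ne (by norm_num)
      rw [card_and_or (fun _ _ => by omega), card_and_or (fun g _ => by have := h23 g; omega),
        card_and_or (fun _ _ => by omega), card_prefix_two_zero_one (m + 1) (by omega),
        card_prefix_two_zero_gap_one m (by omega), card_prefix_two_three_zero_one m (by omega)]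
      unfold risingCount
      ring

theorem admissibleCount_add_six (m : ℕ) :
    admissibleCount (m + 6) + admissibleCount m =
      2 * (admissibleCount (m + 4) + admissibleCount (m + 3) + admissibleCount (m + 2)) := by
  have := admissibleCount_add_four m
  have := admissibleCount_add_four (m + 2)
  have := risingCount_add_three (m + 1)
  have := risingCount_add_three (m + 3)
  simp only [add_assoc, Nat.reduceAdd] at *
  omega

def finEquivIco (n : ℕ) : Fin n ≃ {x : ℤ // 0 ≤ x ∧ x < n} where
  toFun i := ⟨i, by omega, by omega⟩
  invFun x := ⟨x.1.toNat, by omega⟩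
  left_inv i := by ext; simp
  right_inv x := by ext; simp; omega

theorem card_finPerm (n : ℕ) :
    Nat.card {π : Perm (Fin n) // ∀ i, IsShortStep ((π i : ℤ) - i)} = admissibleCount n := by
  let e := (permCongr (finEquivIco n)).trans
    (Perm.subtypeEquivSubtypePerm fun x : ℤ => 0 ≤ x ∧ x < n)
  have he (π : Perm (Fin n)) (i : Fin n) : (e π).1 i = π i := by
    simp [e, Perm.subtypeEquivSubtypePerm, Perm.ofSubtype_apply_of_mem, finEquivIco]
  refine Nat.card_congr ((e.subtypeEquiv fun π => ⟨fun h x h0 hx => ?_, fun h i => ?_⟩).trans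
    (subtypeSubtypeEquivSubtypeInter _ _))
  · lift x to ℕ using h0
    have hxn : x < n := by exact_mod_cast hx
    rw [← Fin.val_mk hxn, he]
    exact h _
  · simpa [he] using h i (by positivity) (by exact_mod_cast i.2)

theorem mk_mul_eq_one_sub_X (u : ℕ → ℕ) (h0 : u 0 = 1) (h1 : u 1 = 0) (h2 : u 2 = 1)
    (h3 : u 3 = 2) (h4 : u 4 = 4) (h5 : u 5 = 6)
    (hrec : ∀ m, u (m + 6) + u m = 2 * (u (m + 4) + u (m + 3) + u (m + 2))) :
    mk (fun n => (u n : ℚ)) * (1 - X - X ^ 2 - X ^ 3 - X ^ 4 + X ^ 5) = 1 - X := by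
  have h1X : (1 + X : ℚ⟦X⟧) ≠ 0 := fun h => by simpa using congrArg constantCoeff h
  refine mul_right_cancel₀ h1X ?_
  set F := mk fun n => (u n : ℚ)
  have : F * (1 - X - X ^ 2 - X ^ 3 - X ^ 4 + X ^ 5) * (1 + X) =
      F - C 2 * (F * X ^ 2 + F * X ^ 3 + F * X ^ 4) + F * X ^ 6 := by
    rw [map_ofNat]
    ring
  rw [this, show (1 - X) * (1 + X) = (1 - X ^ 2 : ℚ⟦X⟧) by ring]
  ext n
  simp only [map_add, map_sub, coeff_C_mul, coeff_mul_X_pow', coeff_one, coeff_X_pow, F, coeff_mk]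
  rcases lt_or_ge n 6 with hn | hn
  · interval_cases n <;> simp [h0, h1, h2, h3, h4, h5] <;> norm_num
  · obtain ⟨m, rfl⟩ := Nat.exists_eq_add_of_le' hn
    have := congrArg (Nat.cast : ℕ → ℚ) (hrec m)
    push_cast at this
    simp only [show m + 6 - 2 = m + 4 by omega, show m + 6 - 3 = m + 3 by omega,
      show m + 6 - 4 = m + 2 by omega, Nat.add_sub_cancel]
    simp
    linarith

end ShortDisplacement

open ShortDisplacement

open PowerSeries in
theorem gf_displacement_one_two
    (f : ℕ → ℕ)
    (hf : ∀ n, f n = Nat.card {π : Equiv.Perm (Fin n) //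
        ∀ i, ((π i : ℤ) - (i : ℤ) = 1 ∨ (π i : ℤ) - (i : ℤ) = 2 ∨
              (π i : ℤ) - (i : ℤ) = -1 ∨ (π i : ℤ) - (i : ℤ) = -2)}) :
    (PowerSeries.mk fun n => (f n : ℚ)) *
        (1 - X - X ^ 2 - X ^ 3 - X ^ 4 + X ^ 5) = 1 - X := by
  obtain rfl : f = admissibleCount := funext fun n => (hf n).trans (card_finPerm n)
  refine mk_mul_eq_one_sub_X _ ?_ ?_ ?_ ?_ ?_ ?_ admissibleCount_add_six <;>
    rw [← card_finPerm, Nat.card_eq_fintype_card] <;> decide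
end

section
/- Let g(n) be the number of permutations π of {1,…,n} with |π(i) - i| ≤ 2 for all i. Then Σ_{n≥0} g(n) x^n = (1-x)/(1 - 2x - 2x³ + x⁵); equivalently g(n) = 2g(n-1) + 2g(n-3) - g(n-5) for n ≥ 5. -/
namespace GFD2

/-- The target value set for state `p` (the allowed "low" values) and length `m`. -/
def Sset (p : Finset ℤ) (m : ℕ) : Set ℤ := {x | (x ∈ p ∨ 3 ≤ x) ∧ x ≤ (m : ℤ)}

/-- The predicate: σ is an enumeration with displacement ≤ 2 onto S. -/
def Pred (m : ℕ) (S : Set ℤ) (σ : Fin m → ℤ) : Prop :=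
  Function.Injective σ ∧ (∀ j : Fin m, (σ j - (j : ℤ) - 1).natAbs ≤ 2) ∧ Set.range σ = S

noncomputable def Cnt (m : ℕ) (S : Set ℤ) : ℕ := Nat.card {σ : Fin m → ℤ // Pred m S σ}

lemma sset_finite (p : Finset ℤ) (m : ℕ) : (Sset p m).Finite := by
  apply ((p.finite_toSet).union (Set.finite_Icc (3 : ℤ) m)).subset
  rintro x ⟨h1 | h2, h3⟩
  · exact Or.inl h1
  · exact Or.inr ⟨h2, h3⟩

lemma finite_pred (m : ℕ) (S : Set ℤ) (hS : S.Finite) (Q : (Fin m → ℤ) → Prop) :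
    Finite {σ : Fin m → ℤ // Pred m S σ ∧ Q σ} := by
  have : Finite S := hS.to_subtype
  apply Finite.of_injective
    (fun σ : {σ : Fin m → ℤ // Pred m S σ ∧ Q σ} =>
      (fun j => (⟨σ.1 j, by
        have h := σ.2.1.2.2
        have : σ.1 j ∈ Set.range σ.1 := Set.mem_range_self j
        rwa [h] at this⟩ : S) : Fin m → S))
  intro σ τ h
  apply Subtype.ext; funext j
  exact congrArg Subtype.val (congrFun h j)


/-- Split a count by a decidable-ish predicate. -/
lemma card_split {α : Type*} (P Q : α → Prop) (h : Finite {a // P a}) :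
    Nat.card {a // P a} = Nat.card {a // P a ∧ Q a} + Nat.card {a // P a ∧ ¬ Q a} := by
  classical
  have e : {a // P a} ≃ {a // P a ∧ Q a} ⊕ {a // P a ∧ ¬ Q a} :=
    (Equiv.sumCompl (fun b : {a // P a} => Q b.1)).symm.trans
      (Equiv.sumCongr
        (Equiv.subtypeSubtypeEquivSubtypeInter P Q)
        (Equiv.subtypeSubtypeEquivSubtypeInter P (fun a => ¬ Q a)))
  rw [Nat.card_congr e]
  have h1 : Finite {a // P a ∧ Q a} :=
    Finite.of_injective (fun x => (⟨x.1, x.2.1⟩ : {a // P a}))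
      (fun x y hxy => Subtype.ext (by simpa using congrArg Subtype.val hxy))
  have h2 : Finite {a // P a ∧ ¬ Q a} :=
    Finite.of_injective (fun x => (⟨x.1, x.2.1⟩ : {a // P a}))
      (fun x y hxy => Subtype.ext (by simpa using congrArg Subtype.val hxy))
  exact Nat.card_sum

lemma pred_zero_mem {m : ℕ} {S : Set ℤ} {σ : Fin (m + 1) → ℤ} (h : Pred (m + 1) S σ) :
    -1 ≤ σ 0 ∧ σ 0 ≤ 3 := by
  have := h.2.1 0
  simp only [Fin.val_zero, Nat.cast_zero] at this
  omega

/-- Decomposition of the count according to the first value. -/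
lemma decomp (m : ℕ) (S : Set ℤ) (hS : S.Finite) :
    Cnt (m + 1) S =
      Nat.card {σ : Fin (m + 1) → ℤ // Pred (m + 1) S σ ∧ σ 0 = -1} +
      Nat.card {σ : Fin (m + 1) → ℤ // Pred (m + 1) S σ ∧ σ 0 = 0} +
      Nat.card {σ : Fin (m + 1) → ℤ // Pred (m + 1) S σ ∧ σ 0 = 1} +
      Nat.card {σ : Fin (m + 1) → ℤ // Pred (m + 1) S σ ∧ σ 0 = 2} +
      Nat.card {σ : Fin (m + 1) → ℤ // Pred (m + 1) S σ ∧ σ 0 = 3} := by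
  have hf : ∀ v : ℤ, ({σ : Fin (m + 1) → ℤ | Pred (m + 1) S σ ∧ σ 0 = v}).Finite :=
    fun v => Set.finite_coe_iff.mp (finite_pred (m + 1) S hS _)
  have hsub : {σ : Fin (m + 1) → ℤ | Pred (m + 1) S σ} =
      {σ : Fin (m + 1) → ℤ | Pred (m + 1) S σ ∧ σ 0 = -1} ∪
      {σ | Pred (m + 1) S σ ∧ σ 0 = 0} ∪ {σ | Pred (m + 1) S σ ∧ σ 0 = 1} ∪
      {σ | Pred (m + 1) S σ ∧ σ 0 = 2} ∪ {σ | Pred (m + 1) S σ ∧ σ 0 = 3} := by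
    ext σ
    simp only [Set.mem_setOf_eq, Set.mem_union]
    constructor
    · intro h
      have hb := pred_zero_mem h
      have : σ 0 = -1 ∨ σ 0 = 0 ∨ σ 0 = 1 ∨ σ 0 = 2 ∨ σ 0 = 3 := by omega
      tauto
    · tauto
  have key : Nat.card {σ : Fin (m + 1) → ℤ // Pred (m + 1) S σ} =
      Set.ncard {σ : Fin (m + 1) → ℤ | Pred (m + 1) S σ} := Nat.card_coe_set_eq _
  have back : ∀ v : ℤ, Set.ncard {σ : Fin (m + 1) → ℤ | Pred (m + 1) S σ ∧ σ 0 = v} =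
      Nat.card {σ : Fin (m + 1) → ℤ // Pred (m + 1) S σ ∧ σ 0 = v} :=
    fun v => (Nat.card_coe_set_eq _).symm
  have hd : ∀ v w : ℤ, v ≠ w →
      Disjoint {σ : Fin (m + 1) → ℤ | Pred (m + 1) S σ ∧ σ 0 = v}
        {σ : Fin (m + 1) → ℤ | Pred (m + 1) S σ ∧ σ 0 = w} := by
    intro v w hvw
    rw [Set.disjoint_left]
    rintro σ ⟨-, h1⟩ ⟨-, h2⟩
    exact hvw (h1 ▸ h2 ▸ rfl)
  rw [Cnt, key, hsub]
  rw [Set.ncard_union_eq (by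
        rw [Set.disjoint_left]
        rintro σ (((⟨-, h1⟩ | ⟨-, h1⟩) | ⟨-, h1⟩) | ⟨-, h1⟩) ⟨-, h2⟩ <;> omega)
      ((((hf (-1)).union (hf 0)).union (hf 1)).union (hf 2)) (hf 3)]
  rw [Set.ncard_union_eq (by
        rw [Set.disjoint_left]
        rintro σ ((⟨-, h1⟩ | ⟨-, h1⟩) | ⟨-, h1⟩) ⟨-, h2⟩ <;> omega)
      (((hf (-1)).union (hf 0)).union (hf 1)) (hf 2)]
  rw [Set.ncard_union_eq (by
        rw [Set.disjoint_left]
        rintro σ (⟨-, h1⟩ | ⟨-, h1⟩) ⟨-, h2⟩ <;> omega)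
      ((hf (-1)).union (hf 0)) (hf 1)]
  rw [Set.ncard_union_eq (hd _ _ (by norm_num)) (hf (-1)) (hf 0)]
  rw [back, back, back, back, back]


lemma vanish_notmem {m : ℕ} {S : Set ℤ} {v : ℤ} (h : v ∉ S) :
    Nat.card {σ : Fin (m + 1) → ℤ // Pred (m + 1) S σ ∧ σ 0 = v} = 0 := by
  have : IsEmpty {σ : Fin (m + 1) → ℤ // Pred (m + 1) S σ ∧ σ 0 = v} := by
    constructor
    rintro ⟨σ, ⟨-, -, hr⟩, h0⟩
    apply h
    rw [← hr, ← h0]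
    exact Set.mem_range_self 0
  exact Nat.card_of_isEmpty

lemma vanish_neg {m : ℕ} {S : Set ℤ} {v : ℤ} (hS : (-1 : ℤ) ∈ S) (hv : v ≠ -1) :
    Nat.card {σ : Fin (m + 1) → ℤ // Pred (m + 1) S σ ∧ σ 0 = v} = 0 := by
  have : IsEmpty {σ : Fin (m + 1) → ℤ // Pred (m + 1) S σ ∧ σ 0 = v} := by
    constructor
    rintro ⟨σ, ⟨hinj, hdisp, hr⟩, h0⟩
    rw [← hr] at hS
    obtain ⟨j, hj⟩ := hS
    have hd := hdisp j
    have : (j : ℕ) ≠ 0 := by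
      intro hj0
      apply hv
      rw [← h0, ← hj]
      congr 1
      exact (Fin.ext hj0).symm
    have : 1 ≤ (j : ℕ) := by omega
    have : (1 : ℤ) ≤ (j : ℕ) := by exact_mod_cast this
    omega
  exact Nat.card_of_isEmpty

lemma cnt_zero_of_nonempty {S : Set ℤ} (hS : S.Nonempty) : Cnt 0 S = 0 := by
  have : IsEmpty {σ : Fin 0 → ℤ // Pred 0 S σ} := by
    constructor
    rintro ⟨σ, -, -, hr⟩
    obtain ⟨x, hx⟩ := hS
    rw [← hr] at hx
    obtain ⟨j, -⟩ := hx
    exact j.elim0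
  exact Nat.card_of_isEmpty

lemma cnt_one_of_pair {S : Set ℤ} {x y : ℤ} (hx : x ∈ S) (hy : y ∈ S) (hxy : x ≠ y) :
    Cnt 1 S = 0 := by
  have : IsEmpty {σ : Fin 1 → ℤ // Pred 1 S σ} := by
    constructor
    rintro ⟨σ, -, -, hr⟩
    rw [← hr] at hx hy
    obtain ⟨j, hj⟩ := hx
    obtain ⟨k, hk⟩ := hy
    apply hxy
    rw [← hj, ← hk, Subsingleton.elim j k]
  exact Nat.card_of_isEmpty

lemma cnt_empty : Cnt 0 (∅ : Set ℤ) = 1 := by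
  have : Unique {σ : Fin 0 → ℤ // Pred 0 (∅ : Set ℤ) σ} := by
    refine ⟨⟨⟨fun j => j.elim0, ?_, fun j => j.elim0, Set.range_eq_empty _⟩⟩, ?_⟩
    · intro a; exact a.elim0
    · rintro ⟨σ, -⟩
      apply Subtype.ext
      funext j
      exact j.elim0
  exact Nat.card_unique

/-- The key step: peeling off the first value. -/
lemma step {m : ℕ} {S S' : Set ℤ} {v : ℤ} (hv : v ∈ S) (hv1 : -1 ≤ v) (hv2 : v ≤ 3)
    (hsh : ∀ x : ℤ, (x + 1 ∈ S ∧ x + 1 ≠ v) ↔ x ∈ S') :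
    Nat.card {σ : Fin (m + 1) → ℤ // Pred (m + 1) S σ ∧ σ 0 = v} = Cnt m S' := by
  apply Nat.card_congr
  refine ⟨fun σ => ⟨fun j => σ.1 j.succ - 1, ?_, ?_, ?_⟩,
          fun τ => ⟨Fin.cases v (fun j => τ.1 j + 1), ⟨?_, ?_, ?_⟩, ?_⟩, ?_, ?_⟩
  · -- injective
    intro j k h
    have h' : σ.1 j.succ - 1 = σ.1 k.succ - 1 := h
    have := σ.2.1.1 (show σ.1 j.succ = σ.1 k.succ by omega)
    exact Fin.succ_injective _ this
  · -- displacement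
    intro j
    have := σ.2.1.2.1 j.succ
    have hja : ((j.succ : ℕ) : ℤ) = (j : ℕ) + 1 := by
      rw [Fin.val_succ]; push_cast; ring
    rw [hja] at this
    convert this using 2
    ring
  · -- range
    ext x
    simp only [Set.mem_range]
    constructor
    · rintro ⟨j, hj⟩
      apply (hsh x).mp
      constructor
      · have : σ.1 j.succ ∈ Set.range σ.1 := Set.mem_range_self _
        rw [σ.2.1.2.2] at this
        convert this using 2
        omega
      · intro hx
        have : σ.1 j.succ = σ.1 0 := by rw [σ.2.2]; omega
        exact (Fin.succ_ne_zero j) (σ.2.1.1 this)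
    · intro hx
      have hx' := (hsh x).mpr hx
      have : x + 1 ∈ Set.range σ.1 := by rw [σ.2.1.2.2]; exact hx'.1
      obtain ⟨i, hi⟩ := this
      have hine : i ≠ 0 := by
        intro h0
        rw [h0, σ.2.2] at hi
        exact hx'.2 hi.symm
      obtain ⟨j, rfl⟩ := Fin.eq_succ_of_ne_zero hine
      exact ⟨j, by omega⟩
  · -- injective (inverse direction)
    have key : ∀ j, τ.1 j + 1 ≠ v := by
      intro j
      have : τ.1 j ∈ S' := (Set.ext_iff.mp τ.2.2.2 (τ.1 j)).mp ⟨j, rfl⟩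
      exact ((hsh (τ.1 j)).mpr this).2
    intro i k h
    induction i using Fin.cases with
    | zero =>
      induction k using Fin.cases with
      | zero => rfl
      | succ k => exact absurd h.symm (key k)
    | succ i =>
      induction k using Fin.cases with
      | zero => exact absurd h (key i)
      | succ k =>
        have : τ.1 i = τ.1 k := by
          simpa using h
        rw [τ.2.1 this]
  · -- displacement (inverse)
    intro j
    induction j using Fin.cases with
    | zero => simp only [Fin.cases_zero, Fin.val_zero, Nat.cast_zero]; omega
    | succ j =>
      have := τ.2.2.1 j
      simp only [Fin.cases_succ]
      have hja : ((j.succ : ℕ) : ℤ) = (j : ℕ) + 1 := by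
        rw [Fin.val_succ]; push_cast; ring
      rw [hja]
      convert this using 2
      ring
  · -- range (inverse)
    ext x
    simp only [Set.mem_range]
    constructor
    · rintro ⟨j, hj⟩
      induction j using Fin.cases with
      | zero => simp only [Fin.cases_zero] at hj; rw [← hj]; exact hv
      | succ j =>
        simp only [Fin.cases_succ] at hj
        have : τ.1 j ∈ S' := (Set.ext_iff.mp τ.2.2.2 (τ.1 j)).mp ⟨j, rfl⟩
        have := ((hsh (τ.1 j)).mpr this).1
        rwa [hj] at this
    · intro hx
      by_cases hxv : x = v
      · exact ⟨0, by rw [Fin.cases_zero, hxv]⟩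
      · have : x - 1 ∈ S' := (hsh (x - 1)).mp ⟨by simpa using hx, by simpa using hxv⟩
        rw [← τ.2.2.2] at this
        obtain ⟨j, hj⟩ := this
        exact ⟨j.succ, by rw [Fin.cases_succ, hj]; ring⟩
  · -- σ 0 = v
    simp
  · -- left inverse
    intro σ
    apply Subtype.ext
    funext j
    induction j using Fin.cases with
    | zero => simp only [Fin.cases_zero]; exact σ.2.2.symm
    | succ j => simp only [Fin.cases_succ]; ring
  · -- right inverse
    intro τ
    apply Subtype.ext
    funext j
    simp only [Fin.cases_succ]
    ring


def p1 : Finset ℤ := ({1, 2} : Finset ℤ)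
def p2 : Finset ℤ := ({0, 2} : Finset ℤ)
def p3 : Finset ℤ := ({0, 1} : Finset ℤ)
def p4 : Finset ℤ := ({-1, 2} : Finset ℤ)
def p5 : Finset ℤ := ({-1, 1} : Finset ℤ)
def p6 : Finset ℤ := ({-1, 0} : Finset ℤ)

noncomputable def bb (p : Finset ℤ) (m : ℕ) : ℕ := Cnt m (Sset p m)

lemma mem_sset_iff {p : Finset ℤ} {x : ℤ} {m : ℕ} :
    x ∈ Sset p m ↔ (x ∈ p ∨ 3 ≤ x) ∧ x ≤ (m : ℤ) := Iff.rfl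

lemma t1a (m : ℕ) :
    Nat.card {σ : Fin (m+1) → ℤ // Pred (m+1) (Sset p1 (m+1)) σ ∧ σ 0 = -1} = 0 := by
  refine vanish_notmem ?_
  rw [mem_sset_iff]; simp only [p1, p2, p3, p4, p5, p6, Finset.mem_insert, Finset.mem_singleton, true_or, or_true, false_or, or_false, true_and, and_true, not_true, not_false_iff]; omega

lemma t1b (m : ℕ) :
    Nat.card {σ : Fin (m+1) → ℤ // Pred (m+1) (Sset p1 (m+1)) σ ∧ σ 0 = 0} = 0 := by
  refine vanish_notmem ?_
  rw [mem_sset_iff]; simp only [p1, p2, p3, p4, p5, p6, Finset.mem_insert, Finset.mem_singleton, true_or, or_true, false_or, or_false, true_and, and_true, not_true, not_false_iff]; omega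

lemma t1c (m : ℕ) :
    Nat.card {σ : Fin (m+1) → ℤ // Pred (m+1) (Sset p1 (m+1)) σ ∧ σ 0 = 1} = bb p1 m := by
  rw [bb]
  refine step ?_ (by norm_num) (by norm_num) ?_
  · rw [mem_sset_iff]; simp only [p1, p2, p3, p4, p5, p6, Finset.mem_insert, Finset.mem_singleton, true_or, or_true, false_or, or_false, true_and, and_true, not_true, not_false_iff]; omega
  · intro x; rw [mem_sset_iff, mem_sset_iff]; simp only [p1, p2, p3, p4, p5, p6, Finset.mem_insert, Finset.mem_singleton, true_or, or_true, false_or, or_false, true_and, and_true, not_true, not_false_iff]; omega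

lemma t1d (m : ℕ) :
    Nat.card {σ : Fin (m+1) → ℤ // Pred (m+1) (Sset p1 (m+1)) σ ∧ σ 0 = 2} = bb p2 m := by
  cases m with
  | zero =>
    have h2 : bb p2 0 = 0 := by
      rw [bb]
      refine cnt_zero_of_nonempty ⟨(0 : ℤ), ?_⟩
      rw [mem_sset_iff]; simp only [p1, p2, p3, p4, p5, p6, Finset.mem_insert, Finset.mem_singleton, true_or, or_true, false_or, or_false, true_and, and_true, not_true, not_false_iff]; omega
    have h1 : Nat.card {σ : Fin 1 → ℤ // Pred 1 (Sset p1 1) σ ∧ σ 0 = 2} = 0 := by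
      refine vanish_notmem ?_
      rw [mem_sset_iff]; simp only [p1, p2, p3, p4, p5, p6, Finset.mem_insert, Finset.mem_singleton, true_or, or_true, false_or, or_false, true_and, and_true, not_true, not_false_iff]; omega
    rw [h2]; exact h1
  | succ k =>
    rw [bb]
    refine step ?_ (by norm_num) (by norm_num) ?_
    · rw [mem_sset_iff]; simp only [p1, p2, p3, p4, p5, p6, Finset.mem_insert, Finset.mem_singleton, true_or, or_true, false_or, or_false, true_and, and_true, not_true, not_false_iff]; omega
    · intro x; rw [mem_sset_iff, mem_sset_iff]; simp only [p1, p2, p3, p4, p5, p6, Finset.mem_insert, Finset.mem_singleton, true_or, or_true, false_or, or_false, true_and, and_true, not_true, not_false_iff]; omega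

lemma t1e (m : ℕ) :
    Nat.card {σ : Fin (m+1) → ℤ // Pred (m+1) (Sset p1 (m+1)) σ ∧ σ 0 = 3} = bb p3 m := by
  cases m with
  | zero =>
    have h2 : bb p3 0 = 0 := by
      rw [bb]
      refine cnt_zero_of_nonempty ⟨(0 : ℤ), ?_⟩
      rw [mem_sset_iff]; simp only [p1, p2, p3, p4, p5, p6, Finset.mem_insert, Finset.mem_singleton, true_or, or_true, false_or, or_false, true_and, and_true, not_true, not_false_iff]; omega
    have h1 : Nat.card {σ : Fin 1 → ℤ // Pred 1 (Sset p1 1) σ ∧ σ 0 = 3} = 0 := by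
      refine vanish_notmem ?_
      rw [mem_sset_iff]; simp only [p1, p2, p3, p4, p5, p6, Finset.mem_insert, Finset.mem_singleton, true_or, or_true, false_or, or_false, true_and, and_true, not_true, not_false_iff]; omega
    rw [h2]; exact h1
  | succ k =>
    cases k with
    | zero =>
      have h2 : bb p3 1 = 0 := by
        rw [bb]
        refine cnt_one_of_pair (x := (0 : ℤ)) (y := (1 : ℤ)) ?_ ?_ (by norm_num)
        · rw [mem_sset_iff]; simp only [p1, p2, p3, p4, p5, p6, Finset.mem_insert, Finset.mem_singleton, true_or, or_true, false_or, or_false, true_and, and_true, not_true, not_false_iff]; omega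
        · rw [mem_sset_iff]; simp only [p1, p2, p3, p4, p5, p6, Finset.mem_insert, Finset.mem_singleton, true_or, or_true, false_or, or_false, true_and, and_true, not_true, not_false_iff]; omega
      have h1 : Nat.card {σ : Fin 2 → ℤ // Pred 2 (Sset p1 2) σ ∧ σ 0 = 3} = 0 := by
        refine vanish_notmem ?_
        rw [mem_sset_iff]; simp only [p1, p2, p3, p4, p5, p6, Finset.mem_insert, Finset.mem_singleton, true_or, or_true, false_or, or_false, true_and, and_true, not_true, not_false_iff]; omega
      rw [h2]; exact h1
    | succ l =>
      rw [bb]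
      refine step ?_ (by norm_num) (by norm_num) ?_
      · rw [mem_sset_iff]; simp only [p1, p2, p3, p4, p5, p6, Finset.mem_insert, Finset.mem_singleton, true_or, or_true, false_or, or_false, true_and, and_true, not_true, not_false_iff]; omega
      · intro x; rw [mem_sset_iff, mem_sset_iff]; simp only [p1, p2, p3, p4, p5, p6, Finset.mem_insert, Finset.mem_singleton, true_or, or_true, false_or, or_false, true_and, and_true, not_true, not_false_iff]; omega

lemma t2a (m : ℕ) :
    Nat.card {σ : Fin (m+1) → ℤ // Pred (m+1) (Sset p2 (m+1)) σ ∧ σ 0 = -1} = 0 := by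
  refine vanish_notmem ?_
  rw [mem_sset_iff]; simp only [p1, p2, p3, p4, p5, p6, Finset.mem_insert, Finset.mem_singleton, true_or, or_true, false_or, or_false, true_and, and_true, not_true, not_false_iff]; omega

lemma t2b (m : ℕ) :
    Nat.card {σ : Fin (m+1) → ℤ // Pred (m+1) (Sset p2 (m+1)) σ ∧ σ 0 = 0} = bb p1 m := by
  rw [bb]
  refine step ?_ (by norm_num) (by norm_num) ?_
  · rw [mem_sset_iff]; simp only [p1, p2, p3, p4, p5, p6, Finset.mem_insert, Finset.mem_singleton, true_or, or_true, false_or, or_false, true_and, and_true, not_true, not_false_iff]; omega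
  · intro x; rw [mem_sset_iff, mem_sset_iff]; simp only [p1, p2, p3, p4, p5, p6, Finset.mem_insert, Finset.mem_singleton, true_or, or_true, false_or, or_false, true_and, and_true, not_true, not_false_iff]; omega

lemma t2c (m : ℕ) :
    Nat.card {σ : Fin (m+1) → ℤ // Pred (m+1) (Sset p2 (m+1)) σ ∧ σ 0 = 1} = 0 := by
  refine vanish_notmem ?_
  rw [mem_sset_iff]; simp only [p1, p2, p3, p4, p5, p6, Finset.mem_insert, Finset.mem_singleton, true_or, or_true, false_or, or_false, true_and, and_true, not_true, not_false_iff]; omega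

lemma t2d (m : ℕ) :
    Nat.card {σ : Fin (m+1) → ℤ // Pred (m+1) (Sset p2 (m+1)) σ ∧ σ 0 = 2} = bb p4 m := by
  cases m with
  | zero =>
    have h2 : bb p4 0 = 0 := by
      rw [bb]
      refine cnt_zero_of_nonempty ⟨(-1 : ℤ), ?_⟩
      rw [mem_sset_iff]; simp only [p1, p2, p3, p4, p5, p6, Finset.mem_insert, Finset.mem_singleton, true_or, or_true, false_or, or_false, true_and, and_true, not_true, not_false_iff]; omega
    have h1 : Nat.card {σ : Fin 1 → ℤ // Pred 1 (Sset p2 1) σ ∧ σ 0 = 2} = 0 := by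
      refine vanish_notmem ?_
      rw [mem_sset_iff]; simp only [p1, p2, p3, p4, p5, p6, Finset.mem_insert, Finset.mem_singleton, true_or, or_true, false_or, or_false, true_and, and_true, not_true, not_false_iff]; omega
    rw [h2]; exact h1
  | succ k =>
    rw [bb]
    refine step ?_ (by norm_num) (by norm_num) ?_
    · rw [mem_sset_iff]; simp only [p1, p2, p3, p4, p5, p6, Finset.mem_insert, Finset.mem_singleton, true_or, or_true, false_or, or_false, true_and, and_true, not_true, not_false_iff]; omega
    · intro x; rw [mem_sset_iff, mem_sset_iff]; simp only [p1, p2, p3, p4, p5, p6, Finset.mem_insert, Finset.mem_singleton, true_or, or_true, false_or, or_false, true_and, and_true, not_true, not_false_iff]; omega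

lemma t2e (m : ℕ) :
    Nat.card {σ : Fin (m+1) → ℤ // Pred (m+1) (Sset p2 (m+1)) σ ∧ σ 0 = 3} = bb p5 m := by
  cases m with
  | zero =>
    have h2 : bb p5 0 = 0 := by
      rw [bb]
      refine cnt_zero_of_nonempty ⟨(-1 : ℤ), ?_⟩
      rw [mem_sset_iff]; simp only [p1, p2, p3, p4, p5, p6, Finset.mem_insert, Finset.mem_singleton, true_or, or_true, false_or, or_false, true_and, and_true, not_true, not_false_iff]; omega
    have h1 : Nat.card {σ : Fin 1 → ℤ // Pred 1 (Sset p2 1) σ ∧ σ 0 = 3} = 0 := by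
      refine vanish_notmem ?_
      rw [mem_sset_iff]; simp only [p1, p2, p3, p4, p5, p6, Finset.mem_insert, Finset.mem_singleton, true_or, or_true, false_or, or_false, true_and, and_true, not_true, not_false_iff]; omega
    rw [h2]; exact h1
  | succ k =>
    cases k with
    | zero =>
      have h2 : bb p5 1 = 0 := by
        rw [bb]
        refine cnt_one_of_pair (x := (-1 : ℤ)) (y := (1 : ℤ)) ?_ ?_ (by norm_num)
        · rw [mem_sset_iff]; simp only [p1, p2, p3, p4, p5, p6, Finset.mem_insert, Finset.mem_singleton, true_or, or_true, false_or, or_false, true_and, and_true, not_true, not_false_iff]; omega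
        · rw [mem_sset_iff]; simp only [p1, p2, p3, p4, p5, p6, Finset.mem_insert, Finset.mem_singleton, true_or, or_true, false_or, or_false, true_and, and_true, not_true, not_false_iff]; omega
      have h1 : Nat.card {σ : Fin 2 → ℤ // Pred 2 (Sset p2 2) σ ∧ σ 0 = 3} = 0 := by
        refine vanish_notmem ?_
        rw [mem_sset_iff]; simp only [p1, p2, p3, p4, p5, p6, Finset.mem_insert, Finset.mem_singleton, true_or, or_true, false_or, or_false, true_and, and_true, not_true, not_false_iff]; omega
      rw [h2]; exact h1
    | succ l =>
      rw [bb]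
      refine step ?_ (by norm_num) (by norm_num) ?_
      · rw [mem_sset_iff]; simp only [p1, p2, p3, p4, p5, p6, Finset.mem_insert, Finset.mem_singleton, true_or, or_true, false_or, or_false, true_and, and_true, not_true, not_false_iff]; omega
      · intro x; rw [mem_sset_iff, mem_sset_iff]; simp only [p1, p2, p3, p4, p5, p6, Finset.mem_insert, Finset.mem_singleton, true_or, or_true, false_or, or_false, true_and, and_true, not_true, not_false_iff]; omega

lemma t3a (m : ℕ) :
    Nat.card {σ : Fin (m+1) → ℤ // Pred (m+1) (Sset p3 (m+1)) σ ∧ σ 0 = -1} = 0 := by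
  refine vanish_notmem ?_
  rw [mem_sset_iff]; simp only [p1, p2, p3, p4, p5, p6, Finset.mem_insert, Finset.mem_singleton, true_or, or_true, false_or, or_false, true_and, and_true, not_true, not_false_iff]; omega

lemma t3b (m : ℕ) :
    Nat.card {σ : Fin (m+1) → ℤ // Pred (m+1) (Sset p3 (m+1)) σ ∧ σ 0 = 0} = bb p2 m := by
  rw [bb]
  refine step ?_ (by norm_num) (by norm_num) ?_
  · rw [mem_sset_iff]; simp only [p1, p2, p3, p4, p5, p6, Finset.mem_insert, Finset.mem_singleton, true_or, or_true, false_or, or_false, true_and, and_true, not_true, not_false_iff]; omega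
  · intro x; rw [mem_sset_iff, mem_sset_iff]; simp only [p1, p2, p3, p4, p5, p6, Finset.mem_insert, Finset.mem_singleton, true_or, or_true, false_or, or_false, true_and, and_true, not_true, not_false_iff]; omega

lemma t3c (m : ℕ) :
    Nat.card {σ : Fin (m+1) → ℤ // Pred (m+1) (Sset p3 (m+1)) σ ∧ σ 0 = 1} = bb p4 m := by
  rw [bb]
  refine step ?_ (by norm_num) (by norm_num) ?_
  · rw [mem_sset_iff]; simp only [p1, p2, p3, p4, p5, p6, Finset.mem_insert, Finset.mem_singleton, true_or, or_true, false_or, or_false, true_and, and_true, not_true, not_false_iff]; omega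
  · intro x; rw [mem_sset_iff, mem_sset_iff]; simp only [p1, p2, p3, p4, p5, p6, Finset.mem_insert, Finset.mem_singleton, true_or, or_true, false_or, or_false, true_and, and_true, not_true, not_false_iff]; omega

lemma t3d (m : ℕ) :
    Nat.card {σ : Fin (m+1) → ℤ // Pred (m+1) (Sset p3 (m+1)) σ ∧ σ 0 = 2} = 0 := by
  refine vanish_notmem ?_
  rw [mem_sset_iff]; simp only [p1, p2, p3, p4, p5, p6, Finset.mem_insert, Finset.mem_singleton, true_or, or_true, false_or, or_false, true_and, and_true, not_true, not_false_iff]; omega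

lemma t3e (m : ℕ) :
    Nat.card {σ : Fin (m+1) → ℤ // Pred (m+1) (Sset p3 (m+1)) σ ∧ σ 0 = 3} = bb p6 m := by
  cases m with
  | zero =>
    have h2 : bb p6 0 = 0 := by
      rw [bb]
      refine cnt_zero_of_nonempty ⟨(-1 : ℤ), ?_⟩
      rw [mem_sset_iff]; simp only [p1, p2, p3, p4, p5, p6, Finset.mem_insert, Finset.mem_singleton, true_or, or_true, false_or, or_false, true_and, and_true, not_true, not_false_iff]; omega
    have h1 : Nat.card {σ : Fin 1 → ℤ // Pred 1 (Sset p3 1) σ ∧ σ 0 = 3} = 0 := by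
      refine vanish_notmem ?_
      rw [mem_sset_iff]; simp only [p1, p2, p3, p4, p5, p6, Finset.mem_insert, Finset.mem_singleton, true_or, or_true, false_or, or_false, true_and, and_true, not_true, not_false_iff]; omega
    rw [h2]; exact h1
  | succ k =>
    cases k with
    | zero =>
      have h2 : bb p6 1 = 0 := by
        rw [bb]
        refine cnt_one_of_pair (x := (-1 : ℤ)) (y := (0 : ℤ)) ?_ ?_ (by norm_num)
        · rw [mem_sset_iff]; simp only [p1, p2, p3, p4, p5, p6, Finset.mem_insert, Finset.mem_singleton, true_or, or_true, false_or, or_false, true_and, and_true, not_true, not_false_iff]; omega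
        · rw [mem_sset_iff]; simp only [p1, p2, p3, p4, p5, p6, Finset.mem_insert, Finset.mem_singleton, true_or, or_true, false_or, or_false, true_and, and_true, not_true, not_false_iff]; omega
      have h1 : Nat.card {σ : Fin 2 → ℤ // Pred 2 (Sset p3 2) σ ∧ σ 0 = 3} = 0 := by
        refine vanish_notmem ?_
        rw [mem_sset_iff]; simp only [p1, p2, p3, p4, p5, p6, Finset.mem_insert, Finset.mem_singleton, true_or, or_true, false_or, or_false, true_and, and_true, not_true, not_false_iff]; omega
      rw [h2]; exact h1
    | succ l =>
      rw [bb]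
      refine step ?_ (by norm_num) (by norm_num) ?_
      · rw [mem_sset_iff]; simp only [p1, p2, p3, p4, p5, p6, Finset.mem_insert, Finset.mem_singleton, true_or, or_true, false_or, or_false, true_and, and_true, not_true, not_false_iff]; omega
      · intro x; rw [mem_sset_iff, mem_sset_iff]; simp only [p1, p2, p3, p4, p5, p6, Finset.mem_insert, Finset.mem_singleton, true_or, or_true, false_or, or_false, true_and, and_true, not_true, not_false_iff]; omega

lemma t4a (m : ℕ) :
    Nat.card {σ : Fin (m+1) → ℤ // Pred (m+1) (Sset p4 (m+1)) σ ∧ σ 0 = -1} = bb p1 m := by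
  rw [bb]
  refine step ?_ (by norm_num) (by norm_num) ?_
  · rw [mem_sset_iff]; simp only [p1, p2, p3, p4, p5, p6, Finset.mem_insert, Finset.mem_singleton, true_or, or_true, false_or, or_false, true_and, and_true, not_true, not_false_iff]; omega
  · intro x; rw [mem_sset_iff, mem_sset_iff]; simp only [p1, p2, p3, p4, p5, p6, Finset.mem_insert, Finset.mem_singleton, true_or, or_true, false_or, or_false, true_and, and_true, not_true, not_false_iff]; omega

lemma t4b (m : ℕ) :
    Nat.card {σ : Fin (m+1) → ℤ // Pred (m+1) (Sset p4 (m+1)) σ ∧ σ 0 = 0} = 0 := by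
  refine vanish_neg ?_ (by norm_num)
  rw [mem_sset_iff]; simp only [p1, p2, p3, p4, p5, p6, Finset.mem_insert, Finset.mem_singleton, true_or, or_true, false_or, or_false, true_and, and_true, not_true, not_false_iff]; omega

lemma t4c (m : ℕ) :
    Nat.card {σ : Fin (m+1) → ℤ // Pred (m+1) (Sset p4 (m+1)) σ ∧ σ 0 = 1} = 0 := by
  refine vanish_neg ?_ (by norm_num)
  rw [mem_sset_iff]; simp only [p1, p2, p3, p4, p5, p6, Finset.mem_insert, Finset.mem_singleton, true_or, or_true, false_or, or_false, true_and, and_true, not_true, not_false_iff]; omega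

lemma t4d (m : ℕ) :
    Nat.card {σ : Fin (m+1) → ℤ // Pred (m+1) (Sset p4 (m+1)) σ ∧ σ 0 = 2} = 0 := by
  refine vanish_neg ?_ (by norm_num)
  rw [mem_sset_iff]; simp only [p1, p2, p3, p4, p5, p6, Finset.mem_insert, Finset.mem_singleton, true_or, or_true, false_or, or_false, true_and, and_true, not_true, not_false_iff]; omega

lemma t4e (m : ℕ) :
    Nat.card {σ : Fin (m+1) → ℤ // Pred (m+1) (Sset p4 (m+1)) σ ∧ σ 0 = 3} = 0 := by
  refine vanish_neg ?_ (by norm_num)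
  rw [mem_sset_iff]; simp only [p1, p2, p3, p4, p5, p6, Finset.mem_insert, Finset.mem_singleton, true_or, or_true, false_or, or_false, true_and, and_true, not_true, not_false_iff]; omega

lemma t5a (m : ℕ) :
    Nat.card {σ : Fin (m+1) → ℤ // Pred (m+1) (Sset p5 (m+1)) σ ∧ σ 0 = -1} = bb p2 m := by
  rw [bb]
  refine step ?_ (by norm_num) (by norm_num) ?_
  · rw [mem_sset_iff]; simp only [p1, p2, p3, p4, p5, p6, Finset.mem_insert, Finset.mem_singleton, true_or, or_true, false_or, or_false, true_and, and_true, not_true, not_false_iff]; omega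
  · intro x; rw [mem_sset_iff, mem_sset_iff]; simp only [p1, p2, p3, p4, p5, p6, Finset.mem_insert, Finset.mem_singleton, true_or, or_true, false_or, or_false, true_and, and_true, not_true, not_false_iff]; omega

lemma t5b (m : ℕ) :
    Nat.card {σ : Fin (m+1) → ℤ // Pred (m+1) (Sset p5 (m+1)) σ ∧ σ 0 = 0} = 0 := by
  refine vanish_neg ?_ (by norm_num)
  rw [mem_sset_iff]; simp only [p1, p2, p3, p4, p5, p6, Finset.mem_insert, Finset.mem_singleton, true_or, or_true, false_or, or_false, true_and, and_true, not_true, not_false_iff]; omega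

lemma t5c (m : ℕ) :
    Nat.card {σ : Fin (m+1) → ℤ // Pred (m+1) (Sset p5 (m+1)) σ ∧ σ 0 = 1} = 0 := by
  refine vanish_neg ?_ (by norm_num)
  rw [mem_sset_iff]; simp only [p1, p2, p3, p4, p5, p6, Finset.mem_insert, Finset.mem_singleton, true_or, or_true, false_or, or_false, true_and, and_true, not_true, not_false_iff]; omega

lemma t5d (m : ℕ) :
    Nat.card {σ : Fin (m+1) → ℤ // Pred (m+1) (Sset p5 (m+1)) σ ∧ σ 0 = 2} = 0 := by
  refine vanish_neg ?_ (by norm_num)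
  rw [mem_sset_iff]; simp only [p1, p2, p3, p4, p5, p6, Finset.mem_insert, Finset.mem_singleton, true_or, or_true, false_or, or_false, true_and, and_true, not_true, not_false_iff]; omega

lemma t5e (m : ℕ) :
    Nat.card {σ : Fin (m+1) → ℤ // Pred (m+1) (Sset p5 (m+1)) σ ∧ σ 0 = 3} = 0 := by
  refine vanish_neg ?_ (by norm_num)
  rw [mem_sset_iff]; simp only [p1, p2, p3, p4, p5, p6, Finset.mem_insert, Finset.mem_singleton, true_or, or_true, false_or, or_false, true_and, and_true, not_true, not_false_iff]; omega

lemma t6a (m : ℕ) :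
    Nat.card {σ : Fin (m+1) → ℤ // Pred (m+1) (Sset p6 (m+1)) σ ∧ σ 0 = -1} = bb p4 m := by
  rw [bb]
  refine step ?_ (by norm_num) (by norm_num) ?_
  · rw [mem_sset_iff]; simp only [p1, p2, p3, p4, p5, p6, Finset.mem_insert, Finset.mem_singleton, true_or, or_true, false_or, or_false, true_and, and_true, not_true, not_false_iff]; omega
  · intro x; rw [mem_sset_iff, mem_sset_iff]; simp only [p1, p2, p3, p4, p5, p6, Finset.mem_insert, Finset.mem_singleton, true_or, or_true, false_or, or_false, true_and, and_true, not_true, not_false_iff]; omega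

lemma t6b (m : ℕ) :
    Nat.card {σ : Fin (m+1) → ℤ // Pred (m+1) (Sset p6 (m+1)) σ ∧ σ 0 = 0} = 0 := by
  refine vanish_neg ?_ (by norm_num)
  rw [mem_sset_iff]; simp only [p1, p2, p3, p4, p5, p6, Finset.mem_insert, Finset.mem_singleton, true_or, or_true, false_or, or_false, true_and, and_true, not_true, not_false_iff]; omega

lemma t6c (m : ℕ) :
    Nat.card {σ : Fin (m+1) → ℤ // Pred (m+1) (Sset p6 (m+1)) σ ∧ σ 0 = 1} = 0 := by
  refine vanish_neg ?_ (by norm_num)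
  rw [mem_sset_iff]; simp only [p1, p2, p3, p4, p5, p6, Finset.mem_insert, Finset.mem_singleton, true_or, or_true, false_or, or_false, true_and, and_true, not_true, not_false_iff]; omega

lemma t6d (m : ℕ) :
    Nat.card {σ : Fin (m+1) → ℤ // Pred (m+1) (Sset p6 (m+1)) σ ∧ σ 0 = 2} = 0 := by
  refine vanish_neg ?_ (by norm_num)
  rw [mem_sset_iff]; simp only [p1, p2, p3, p4, p5, p6, Finset.mem_insert, Finset.mem_singleton, true_or, or_true, false_or, or_false, true_and, and_true, not_true, not_false_iff]; omega

lemma t6e (m : ℕ) :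
    Nat.card {σ : Fin (m+1) → ℤ // Pred (m+1) (Sset p6 (m+1)) σ ∧ σ 0 = 3} = 0 := by
  refine vanish_neg ?_ (by norm_num)
  rw [mem_sset_iff]; simp only [p1, p2, p3, p4, p5, p6, Finset.mem_insert, Finset.mem_singleton, true_or, or_true, false_or, or_false, true_and, and_true, not_true, not_false_iff]; omega

lemma rec1 (m : ℕ) : bb p1 (m + 1) = bb p1 m + bb p2 m + bb p3 m := by
  rw [bb, decomp _ _ (sset_finite _ _), t1a, t1b, t1c, t1d, t1e]
  omega

lemma rec2 (m : ℕ) : bb p2 (m + 1) = bb p1 m + bb p4 m + bb p5 m := by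
  rw [bb, decomp _ _ (sset_finite _ _), t2a, t2b, t2c, t2d, t2e]
  omega

lemma rec3 (m : ℕ) : bb p3 (m + 1) = bb p2 m + bb p4 m + bb p6 m := by
  rw [bb, decomp _ _ (sset_finite _ _), t3a, t3b, t3c, t3d, t3e]
  omega

lemma rec4 (m : ℕ) : bb p4 (m + 1) = bb p1 m := by
  rw [bb, decomp _ _ (sset_finite _ _), t4a, t4b, t4c, t4d, t4e]
  omega

lemma rec5 (m : ℕ) : bb p5 (m + 1) = bb p2 m := by
  rw [bb, decomp _ _ (sset_finite _ _), t5a, t5b, t5c, t5d, t5e]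
  omega

lemma rec6 (m : ℕ) : bb p6 (m + 1) = bb p4 m := by
  rw [bb, decomp _ _ (sset_finite _ _), t6a, t6b, t6c, t6d, t6e]
  omega


lemma g_eq (n : ℕ) :
    Nat.card {π : Equiv.Perm (Fin n) // ∀ i, ((π i : ℤ) - (i : ℤ)).natAbs ≤ 2} = bb p1 n := by
  rw [bb]
  apply Nat.card_congr
  have hmem1 : ∀ x : ℤ, x ∈ Sset p1 n ↔ 1 ≤ x ∧ x ≤ (n : ℤ) := by
    intro x
    rw [mem_sset_iff]
    simp only [p1, Finset.mem_insert, Finset.mem_singleton]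
    omega
  refine Equiv.ofBijective
    (fun π => ⟨fun j => ((π.1 j : ℕ) : ℤ) + 1, ?_, ?_, ?_⟩) ⟨?_, ?_⟩
  · -- injective
    intro j k h
    have h' : ((π.1 j : ℕ) : ℤ) + 1 = ((π.1 k : ℕ) : ℤ) + 1 := h
    have : (π.1 j : ℕ) = (π.1 k : ℕ) := by omega
    exact π.1.injective (Fin.ext this)
  · -- displacement
    intro j
    have := π.2 j
    beta_reduce
    omega
  · -- range
    ext x
    simp only [Set.mem_range]
    rw [hmem1]
    constructor
    · rintro ⟨j, rfl⟩
      have := (π.1 j).isLt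
      omega
    · rintro ⟨h1, h2⟩
      have hn : 0 < n := by
        rcases Nat.eq_zero_or_pos n with h | h
        · subst h; omega
        · exact h
      refine ⟨π.1.symm ⟨(x - 1).toNat, by omega⟩, ?_⟩
      rw [Equiv.apply_symm_apply]
      simp only
      omega
  · -- injectivity of the big map
    intro π π' h
    apply Subtype.ext
    apply Equiv.ext
    intro j
    have h' : ((π.1 j : ℕ) : ℤ) + 1 = ((π'.1 j : ℕ) : ℤ) + 1 := congrFun (congrArg Subtype.val h) j
    exact Fin.ext (by omega)
  · -- surjectivity
    rintro ⟨σ, hinj, hdisp, hran⟩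
    have hb : ∀ j, 1 ≤ σ j ∧ σ j ≤ (n : ℤ) := by
      intro j
      have : σ j ∈ Sset p1 n := (Set.ext_iff.mp hran (σ j)).mp ⟨j, rfl⟩
      exact (hmem1 (σ j)).mp this
    have hlt : ∀ j : Fin n, (σ j - 1).toNat < n := by
      intro j
      have := hb j
      omega
    set π0 : Fin n → Fin n := fun j => ⟨(σ j - 1).toNat, hlt j⟩ with hπ0
    have hinj0 : Function.Injective π0 := by
      intro j k h
      have h' : (σ j - 1).toNat = (σ k - 1).toNat := congrArg Fin.val h
      have hbj := hb j
      have hbk := hb k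
      exact hinj (show σ j = σ k by omega)
    have hbij := Finite.injective_iff_bijective.mp hinj0
    refine ⟨⟨Equiv.ofBijective π0 hbij, ?_⟩, ?_⟩
    · intro i
      have h1 : ((Equiv.ofBijective π0 hbij) i : ℕ) = (σ i - 1).toNat := rfl
      have h2 := hdisp i
      have h3 := hb i
      rw [h1]
      omega
    · apply Subtype.ext
      funext j
      simp only
      have h1 : ((Equiv.ofBijective π0 hbij) j : ℕ) = (σ j - 1).toNat := rfl
      rw [h1]
      have := hb j
      omega


lemma key (n : ℕ) :
    (bb p1 (n + 5) : ℤ) = 2 * bb p1 (n + 4) + 2 * bb p1 (n + 2) - bb p1 n := by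
  have h1_0 : bb p1 (n + 1) = bb p1 (n) + bb p2 (n) + bb p3 (n) := rec1 (n)
  have h2_0 : bb p2 (n + 1) = bb p1 (n) + bb p4 (n) + bb p5 (n) := rec2 (n)
  have h3_0 : bb p3 (n + 1) = bb p2 (n) + bb p4 (n) + bb p6 (n) := rec3 (n)
  have h4_0 : bb p4 (n + 1) = bb p1 (n) := rec4 (n)
  have h5_0 : bb p5 (n + 1) = bb p2 (n) := rec5 (n)
  have h6_0 : bb p6 (n + 1) = bb p4 (n) := rec6 (n)
  have h1_1 : bb p1 (n + 2) = bb p1 (n + 1) + bb p2 (n + 1) + bb p3 (n + 1) := rec1 (n + 1)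
  have h2_1 : bb p2 (n + 2) = bb p1 (n + 1) + bb p4 (n + 1) + bb p5 (n + 1) := rec2 (n + 1)
  have h3_1 : bb p3 (n + 2) = bb p2 (n + 1) + bb p4 (n + 1) + bb p6 (n + 1) := rec3 (n + 1)
  have h4_1 : bb p4 (n + 2) = bb p1 (n + 1) := rec4 (n + 1)
  have h5_1 : bb p5 (n + 2) = bb p2 (n + 1) := rec5 (n + 1)
  have h6_1 : bb p6 (n + 2) = bb p4 (n + 1) := rec6 (n + 1)
  have h1_2 : bb p1 (n + 3) = bb p1 (n + 2) + bb p2 (n + 2) + bb p3 (n + 2) := rec1 (n + 2)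
  have h2_2 : bb p2 (n + 3) = bb p1 (n + 2) + bb p4 (n + 2) + bb p5 (n + 2) := rec2 (n + 2)
  have h3_2 : bb p3 (n + 3) = bb p2 (n + 2) + bb p4 (n + 2) + bb p6 (n + 2) := rec3 (n + 2)
  have h4_2 : bb p4 (n + 3) = bb p1 (n + 2) := rec4 (n + 2)
  have h5_2 : bb p5 (n + 3) = bb p2 (n + 2) := rec5 (n + 2)
  have h6_2 : bb p6 (n + 3) = bb p4 (n + 2) := rec6 (n + 2)
  have h1_3 : bb p1 (n + 4) = bb p1 (n + 3) + bb p2 (n + 3) + bb p3 (n + 3) := rec1 (n + 3)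
  have h2_3 : bb p2 (n + 4) = bb p1 (n + 3) + bb p4 (n + 3) + bb p5 (n + 3) := rec2 (n + 3)
  have h3_3 : bb p3 (n + 4) = bb p2 (n + 3) + bb p4 (n + 3) + bb p6 (n + 3) := rec3 (n + 3)
  have h4_3 : bb p4 (n + 4) = bb p1 (n + 3) := rec4 (n + 3)
  have h5_3 : bb p5 (n + 4) = bb p2 (n + 3) := rec5 (n + 3)
  have h6_3 : bb p6 (n + 4) = bb p4 (n + 3) := rec6 (n + 3)
  have h1_4 : bb p1 (n + 5) = bb p1 (n + 4) + bb p2 (n + 4) + bb p3 (n + 4) := rec1 (n + 4)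
  have h2_4 : bb p2 (n + 5) = bb p1 (n + 4) + bb p4 (n + 4) + bb p5 (n + 4) := rec2 (n + 4)
  have h3_4 : bb p3 (n + 5) = bb p2 (n + 4) + bb p4 (n + 4) + bb p6 (n + 4) := rec3 (n + 4)
  have h4_4 : bb p4 (n + 5) = bb p1 (n + 4) := rec4 (n + 4)
  have h5_4 : bb p5 (n + 5) = bb p2 (n + 4) := rec5 (n + 4)
  have h6_4 : bb p6 (n + 5) = bb p4 (n + 4) := rec6 (n + 4)
  omega

lemma small_vals :
    bb p1 0 = 1 ∧ bb p1 1 = 1 ∧ bb p1 2 = 2 ∧ bb p1 3 = 6 ∧ bb p1 4 = 14 := by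
  have z1 : bb p1 0 = 1 := by
    rw [bb]
    have he : Sset p1 0 = (∅ : Set ℤ) := by
      ext x
      rw [mem_sset_iff]
      simp only [p1, Finset.mem_insert, Finset.mem_singleton, Set.mem_empty_iff_false, iff_false]
      omega
    rw [he]
    exact cnt_empty
  have z2 : bb p2 0 = 0 := by
    rw [bb]
    refine cnt_zero_of_nonempty ⟨(0 : ℤ), ?_⟩
    rw [mem_sset_iff]
    simp only [p2, Finset.mem_insert, Finset.mem_singleton, true_or, or_true, false_or,
      or_false, true_and, and_true]
    omega
  have z3 : bb p3 0 = 0 := by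
    rw [bb]
    refine cnt_zero_of_nonempty ⟨(0 : ℤ), ?_⟩
    rw [mem_sset_iff]
    simp only [p3, Finset.mem_insert, Finset.mem_singleton, true_or, or_true, false_or,
      or_false, true_and, and_true]
    omega
  have z4 : bb p4 0 = 0 := by
    rw [bb]
    refine cnt_zero_of_nonempty ⟨(-1 : ℤ), ?_⟩
    rw [mem_sset_iff]
    simp only [p4, Finset.mem_insert, Finset.mem_singleton, true_or, or_true, false_or,
      or_false, true_and, and_true]
    omega
  have z5 : bb p5 0 = 0 := by
    rw [bb]
    refine cnt_zero_of_nonempty ⟨(-1 : ℤ), ?_⟩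
    rw [mem_sset_iff]
    simp only [p5, Finset.mem_insert, Finset.mem_singleton, true_or, or_true, false_or,
      or_false, true_and, and_true]
    omega
  have z6 : bb p6 0 = 0 := by
    rw [bb]
    refine cnt_zero_of_nonempty ⟨(-1 : ℤ), ?_⟩
    rw [mem_sset_iff]
    simp only [p6, Finset.mem_insert, Finset.mem_singleton, true_or, or_true, false_or,
      or_false, true_and, and_true]
    omega
  have s1_0 : bb p1 1 = bb p1 0 + bb p2 0 + bb p3 0 := rec1 0
  have s2_0 : bb p2 1 = bb p1 0 + bb p4 0 + bb p5 0 := rec2 0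
  have s3_0 : bb p3 1 = bb p2 0 + bb p4 0 + bb p6 0 := rec3 0
  have s4_0 : bb p4 1 = bb p1 0 := rec4 0
  have s5_0 : bb p5 1 = bb p2 0 := rec5 0
  have s6_0 : bb p6 1 = bb p4 0 := rec6 0
  have s1_1 : bb p1 2 = bb p1 1 + bb p2 1 + bb p3 1 := rec1 1
  have s2_1 : bb p2 2 = bb p1 1 + bb p4 1 + bb p5 1 := rec2 1
  have s3_1 : bb p3 2 = bb p2 1 + bb p4 1 + bb p6 1 := rec3 1
  have s4_1 : bb p4 2 = bb p1 1 := rec4 1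
  have s5_1 : bb p5 2 = bb p2 1 := rec5 1
  have s6_1 : bb p6 2 = bb p4 1 := rec6 1
  have s1_2 : bb p1 3 = bb p1 2 + bb p2 2 + bb p3 2 := rec1 2
  have s2_2 : bb p2 3 = bb p1 2 + bb p4 2 + bb p5 2 := rec2 2
  have s3_2 : bb p3 3 = bb p2 2 + bb p4 2 + bb p6 2 := rec3 2
  have s4_2 : bb p4 3 = bb p1 2 := rec4 2
  have s5_2 : bb p5 3 = bb p2 2 := rec5 2
  have s6_2 : bb p6 3 = bb p4 2 := rec6 2
  have s1_3 : bb p1 4 = bb p1 3 + bb p2 3 + bb p3 3 := rec1 3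
  have s2_3 : bb p2 4 = bb p1 3 + bb p4 3 + bb p5 3 := rec2 3
  have s3_3 : bb p3 4 = bb p2 3 + bb p4 3 + bb p6 3 := rec3 3
  have s4_3 : bb p4 4 = bb p1 3 := rec4 3
  have s5_3 : bb p5 4 = bb p2 3 := rec5 3
  have s6_3 : bb p6 4 = bb p4 3 := rec6 3
  omega

end GFD2

open PowerSeries in
theorem gf_displacement_at_most_two
    (g : ℕ → ℕ)
    (hg : ∀ n, g n = Nat.card {π : Equiv.Perm (Fin n) //
        ∀ i, ((π i : ℤ) - (i : ℤ)).natAbs ≤ 2}) :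
    (PowerSeries.mk fun n => (g n : ℚ)) * (1 - 2 * X - 2 * X ^ 3 + X ^ 5) = 1 - X ∧
      ∀ n, 5 ≤ n →
        (g n : ℤ) = 2 * g (n - 1) + 2 * g (n - 3) - g (n - 5) := by
  have hgb : ∀ n, g n = GFD2.bb GFD2.p1 n := fun n => (hg n).trans (GFD2.g_eq n)
  obtain ⟨v0, v1, v2, v3, v4⟩ := GFD2.small_vals
  have g0 : g 0 = 1 := by rw [hgb 0]; exact v0
  have g1 : g 1 = 1 := by rw [hgb 1]; exact v1
  have g2 : g 2 = 2 := by rw [hgb 2]; exact v2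
  have g3 : g 3 = 6 := by rw [hgb 3]; exact v3
  have g4 : g 4 = 14 := by rw [hgb 4]; exact v4
  have hrec : ∀ n : ℕ, (g (n + 5) : ℤ) = 2 * g (n + 4) + 2 * g (n + 2) - g n := by
    intro n
    rw [hgb, hgb, hgb, hgb]
    exact GFD2.key n
  constructor
  · have expand : (PowerSeries.mk fun n => (g n : ℚ)) * (1 - 2 * X - 2 * X ^ 3 + X ^ 5) =
        (PowerSeries.mk fun n => (g n : ℚ)) -
        ((PowerSeries.mk fun n => (g n : ℚ)) * X ^ 1 +
          (PowerSeries.mk fun n => (g n : ℚ)) * X ^ 1) -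
        ((PowerSeries.mk fun n => (g n : ℚ)) * X ^ 3 +
          (PowerSeries.mk fun n => (g n : ℚ)) * X ^ 3) +
        (PowerSeries.mk fun n => (g n : ℚ)) * X ^ 5 := by ring
    rw [expand]
    ext n
    simp only [map_add, map_sub, PowerSeries.coeff_mul_X_pow', PowerSeries.coeff_mk,
      PowerSeries.coeff_one, PowerSeries.coeff_X]
    rcases n with _ | _ | _ | _ | _ | n
    · norm_num [g0, g1, g2, g3, g4]
    · norm_num [g0, g1, g2, g3, g4]
    · norm_num [g0, g1, g2, g3, g4]
    · norm_num [g0, g1, g2, g3, g4]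
    · norm_num [g0, g1, g2, g3, g4]
    · have c1 : n + 5 - 1 = n + 4 := by omega
      have c3 : n + 5 - 3 = n + 2 := by omega
      have c5 : n + 5 - 5 = n := by omega
      rw [if_pos (show 1 ≤ n + 5 by omega), if_pos (show 3 ≤ n + 5 by omega),
        if_pos (show 5 ≤ n + 5 by omega), if_neg (show ¬(n + 5 = 0) by omega),
        if_neg (show ¬(n + 5 = 1) by omega), c1, c3, c5]
      have hq : (g (n + 5) : ℚ) = 2 * g (n + 4) + 2 * g (n + 2) - g n := by
        exact_mod_cast hrec n
      linarith
  · intro n hn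
    obtain ⟨m, rfl⟩ : ∃ m, n = m + 5 := ⟨n - 5, by omega⟩
    have c1 : m + 5 - 1 = m + 4 := by omega
    have c3 : m + 5 - 3 = m + 2 := by omega
    have c5 : m + 5 - 5 = m := by omega
    rw [c1, c3, c5]
    exact hrec m
end
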